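/- arXiv:1504.06260 — 9 statements merged into one kernel-verified Lean document; each statement's English description precedes it below -/
import Mathlib

section
/- For every β > 0, every positive integer N, and every real Δf ≥ 0, the fixation probability satisfies the lower bound p_fix(Δf) ≥ 2βΔf/(1 + 2βΔf). -/
/-!
With `x = 2βΔf > 0`, the denominator `1 - e^{-Nx}` of `p_fix` lies in `(0, 1]`, so
`p_fix ≥ 1 - e^{-x}`, and `1 - e^{-x} ≥ x / (1 + x)` is `e^x ≥ 1 + x`.
-/

/-- The fixation probability for selection strength `β` and population size `N`:
`p_fix(Δf) = (1 − e^{−2βΔf})/(1 − e^{−2NβΔf})` for `Δf ≠ 0`, and `p_fix(0) := 1/N`. -/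
noncomputable def pfix (β N Δf : ℝ) : ℝ :=
  if Δf = 0 then 1 / N
  else (1 - Real.exp (-2 * β * Δf)) / (1 - Real.exp (-2 * N * β * Δf))

open Real

lemma div_one_add_le_one_sub_exp_neg {x : ℝ} (hx : -1 < x) : x / (1 + x) ≤ 1 - exp (-x) := by
  have hx1 : 0 < 1 + x := by linarith
  have hexp : exp (-x) ≤ 1 / (1 + x) := by
    rw [exp_neg, inv_eq_one_div]
    exact one_div_le_one_div_of_le hx1 (by linarith [add_one_le_exp x])
  have hsplit : x / (1 + x) = 1 - 1 / (1 + x) := by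
    field_simp
    ring
  linarith

lemma one_sub_exp_neg_pos {y : ℝ} (hy : 0 < y) : 0 < 1 - exp (-y) :=
  sub_pos.mpr (exp_lt_one_iff.mpr (neg_neg_of_pos hy))

lemma one_sub_exp_neg_le_one {y : ℝ} : 1 - exp (-y) ≤ 1 :=
  sub_le_self 1 (exp_nonneg _)

lemma one_sub_exp_neg_le_pfix {β Δf : ℝ} {N : ℕ} (hβ : 0 < β) (hN : 0 < N) (hΔf : 0 < Δf) :
    1 - exp (-(2 * β * Δf)) ≤ pfix β N Δf := by
  have hx : 0 < 2 * β * Δf := by positivity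
  have hNx : 0 < N * (2 * β * Δf) := by positivity
  rw [pfix, if_neg hΔf.ne', show -2 * β * Δf = -(2 * β * Δf) by ring,
    show -2 * N * β * Δf = -(N * (2 * β * Δf)) by ring]
  exact le_div_self (one_sub_exp_neg_pos hx).le (one_sub_exp_neg_pos hNx)
    one_sub_exp_neg_le_one

theorem pfix_lower_bound_nonneg (β : ℝ) (hβ : 0 < β) (N : ℕ) (hN : 0 < N)
    (Δf : ℝ) (h : 0 ≤ Δf) :
    2 * β * Δf / (1 + 2 * β * Δf) ≤ pfix β N Δf := by
  rcases h.eq_or_lt with rfl | hpos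
  · simp [pfix]
  · have hx : 0 < 2 * β * Δf := by positivity
    calc 2 * β * Δf / (1 + 2 * β * Δf) ≤ 1 - exp (-(2 * β * Δf)) :=
          div_one_add_le_one_sub_exp_neg (by linarith)
      _ ≤ pfix β N Δf := one_sub_exp_neg_le_pfix hβ hN hpos
end

section
/- For every β > 0, every positive integer N, and every real Δf ≤ 0, the fixation probability satisfies the lower bound p_fix(Δf) ≥ (−2βΔf)·e^{2NβΔf}, i.e. p_fix(Δf) ≥ −2βΔf / e^{−2NβΔf}. -/
/-! With `x = -2βΔf`, the bound reads `x e^{-Nx} ≤ (e^x - 1)/(e^{Nx} - 1)`. For `x > 0` this follows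
from `x ≤ e^x - 1` and `e^{Nx} - 1 < e^{Nx}`; for `x ≤ 0` the left side is nonpositive while
`1 - e^x` and `1 - e^{Nx}` have the same sign. -/

open Real

lemma div_exp_mul_le_one_sub_exp_div {N : ℝ} (hN : 1 ≤ N) (x : ℝ) :
    x / exp (N * x) ≤ (1 - exp x) / (1 - exp (N * x)) := by
  rcases le_or_gt x 0 with hx | hx
  · have hNx : N * x ≤ 0 := mul_nonpos_of_nonneg_of_nonpos (by linarith) hx
    calc x / exp (N * x) ≤ 0 := div_nonpos_of_nonpos_of_nonneg hx (exp_pos _).le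
      _ ≤ (1 - exp x) / (1 - exp (N * x)) :=
        div_nonneg (sub_nonneg.mpr (exp_le_one_iff.mpr hx))
          (sub_nonneg.mpr (exp_le_one_iff.mpr hNx))
  · have hexp : 1 < exp (N * x) := one_lt_exp_iff.mpr (by positivity)
    have hx_le : x ≤ exp x - 1 := by linarith [add_one_le_exp x]
    rw [← neg_div_neg_eq (1 - exp x), neg_sub, neg_sub]
    exact div_le_div₀ (by linarith) hx_le (by linarith) (by linarith)

theorem pfix_lower_bound_nonpos_general (β : ℝ) (N : ℕ) (hN : 0 < N) (Δf : ℝ) :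
    (-2 * β * Δf) / Real.exp (-2 * N * β * Δf) ≤ pfix β N Δf := by
  unfold pfix
  split_ifs with hΔf
  · simp [hΔf]
  · rw [show -2 * (N : ℝ) * β * Δf = N * (-2 * β * Δf) by ring]
    exact div_exp_mul_le_one_sub_exp_div (by exact_mod_cast hN) _

theorem pfix_lower_bound_nonpos (β : ℝ) (hβ : 0 < β) (N : ℕ) (hN : 0 < N)
    (Δf : ℝ) (h : Δf ≤ 0) :
    (-2 * β * Δf) / Real.exp (-2 * N * β * Δf) ≤ pfix β N Δf :=
  pfix_lower_bound_nonpos_general β N hN Δf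
end

section
/- For every β > 0 and every integer N ≥ 2, the fixation probability p_fix is strictly increasing on ℝ; for N = 1, p_fix is constant equal to 1 (in particular monotonically nondecreasing). -/
/-!
With `q = e^{−2βΔf}` one has `p_fix(Δf) = (1 - q) / (1 - q^N) = 1 / (1 + q + ⋯ + q^{N-1})`,
and this formula also covers `Δf = 0`, where `q = 1`. Since `q` decreases strictly in `Δf`
when `β > 0`, the denominator decreases strictly as soon as it contains the term `q`,
i.e. for `N ≥ 2`; for `N = 1` it is the constant `1`.
-/

open Finset Real

lemma div_one_sub_pow_eq_inv_geom_sum {K : Type*} [Field K] {q : K} (hq : q ≠ 1) (n : ℕ) :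
    (1 - q) / (1 - q ^ n) = (∑ i ∈ range n, q ^ i)⁻¹ := by
  rw [← mul_neg_geom_sum, div_mul_cancel_left₀ (sub_ne_zero.2 hq.symm)]

lemma geom_sum_strictMonoOn {R : Type*} [CommSemiring R] [PartialOrder R] [IsStrictOrderedRing R]
    {n : ℕ} (hn : 2 ≤ n) : StrictMonoOn (fun q : R => ∑ i ∈ range n, q ^ i) (Set.Ici 0) := by
  intro p hp q _ hpq
  refine sum_lt_sum (fun i _ => pow_le_pow_left₀ hp hpq.le i) ⟨1, mem_range.2 hn, ?_⟩
  simpa using hpq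

lemma pfix_eq_inv_geom_sum {β : ℝ} (hβ : β ≠ 0) (N : ℕ) (Δf : ℝ) :
    pfix β N Δf = (∑ k ∈ range N, exp (-2 * β * Δf) ^ k)⁻¹ := by
  rcases eq_or_ne Δf 0 with rfl | hΔf
  · simp [pfix]
  · have hq : exp (-2 * β * Δf) ≠ 1 := by simp [exp_eq_one_iff, hβ, hΔf]
    have hqN : exp (-2 * N * β * Δf) = exp (-2 * β * Δf) ^ N := by
      rw [← exp_nat_mul]; ring_nf
    rw [pfix, if_neg hΔf, hqN, div_one_sub_pow_eq_inv_geom_sum hq]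

lemma pfix_strictMono {β : ℝ} (hβ : 0 < β) {N : ℕ} (hN : 2 ≤ N) : StrictMono (pfix β N) := by
  have hq : StrictAnti fun Δf => exp (-2 * β * Δf) := fun x y hxy => exp_lt_exp.2 (by nlinarith)
  have hsum : StrictAnti fun Δf => ∑ k ∈ range N, exp (-2 * β * Δf) ^ k := fun x y hxy =>
    geom_sum_strictMonoOn hN (exp_pos _).le (exp_pos _).le (hq hxy)
  have hpos (Δf : ℝ) : 0 < ∑ k ∈ range N, exp (-2 * β * Δf) ^ k :=
    geom_sum_pos (exp_pos _).le (by omega)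
  intro x y hxy
  rw [pfix_eq_inv_geom_sum hβ.ne', pfix_eq_inv_geom_sum hβ.ne']
  exact inv_strictAntiOn (hpos y) (hpos x) (hsum hxy)

lemma pfix_one {β : ℝ} (hβ : β ≠ 0) (Δf : ℝ) : pfix β 1 Δf = 1 := by
  simpa using pfix_eq_inv_geom_sum hβ 1 Δf

theorem pfix_strictMono_or_const_general (β : ℝ) (hβ : 0 < β) (N : ℕ) :
    (2 ≤ N → StrictMono (pfix β N)) ∧
    (N = 1 → (∀ Δf : ℝ, pfix β N Δf = 1) ∧ Monotone (pfix β N)) := by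
  refine ⟨pfix_strictMono hβ, ?_⟩
  rintro rfl
  have hconst : pfix β (1 : ℕ) = fun _ => 1 := funext (by simpa using pfix_one hβ.ne')
  exact ⟨congrFun hconst, hconst ▸ monotone_const⟩

theorem pfix_strictMono_or_const (β : ℝ) (hβ : 0 < β) (N : ℕ) (hN : 0 < N) :
    (2 ≤ N → StrictMono (pfix β N)) ∧
    (N = 1 → (∀ Δf : ℝ, pfix β N Δf = 1) ∧ Monotone (pfix β N)) :=
  pfix_strictMono_or_const_general β hβ N
end

section
/- For every n ≥ 2, every integer 0 ≤ i ≤ n, and every positive integer k with k ≤ n − i, the probability that standard bit mutation increases the number of ones from i by k satisfies mut(i, i+k) ≤ ((n−i)/n)^k · (1 − 1/n)^{n−k} · 1.14/k!. -/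
/-- `mutProb n i j` is the probability that standard bit mutation with rate `1/n`
(each of the `n` bits flips independently with probability `1/n`), applied to a bit
string of length `n` with exactly `i` ones, produces a string with exactly `j` ones.
The sum runs over the number `a` of 1-bits that flip to 0; then `j + a - i` 0-bits
must flip to 1 (a term is zero unless `i ≤ j + a`). -/
noncomputable def mutProb (n i j : ℕ) : ℝ :=
  ∑ a ∈ Finset.range (n + 1),
    if i ≤ j + a then
      (Nat.choose i a : ℝ) * (Nat.choose (n - i) (j + a - i)) *
        (1 / n) ^ (a + (j + a - i)) * (1 - 1 / n) ^ (n - (a + (j + a - i)))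
    else 0

/-!
Writing `m = n - i`, `p = 1/n` and `q = 1 - p`, the probability is
`∑ₐ C(i, a) C(m, k + a) p^(k + 2a) q^(n - k - 2a)`, where `a` counts the 1-bits that flip.
Since `C(i, a) ≤ iᵃ/a!` and, for `k ≥ 1`, `C(m, k + a) ≤ C(m, k) (m - k)ᵃ/(a + 1)!`, and since
`i (m - k) p² ≤ ((n - 1) p)²/4 ≤ q²/4` by AM-GM, the `a`-th term is at most
`C(m, k) pᵏ qⁿ⁻ᵏ · (1/4)ᵃ/(a! (a + 1)!)`. So the probability is at most
`C(m, k) pᵏ qⁿ⁻ᵏ · ∑ₐ (1/4)ᵃ/(a! (a + 1)!) ≤ (mᵏ/k!) pᵏ qⁿ⁻ᵏ · 163/144`, and `163/144 < 1.14`.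
-/

open Finset Nat

theorem Nat.choose_add_mul_factorial_succ_le {m k : ℕ} (hk : 1 ≤ k) (a : ℕ) :
    m.choose (k + a) * (a + 1)! ≤ m.choose k * (m - k) ^ a := by
  induction a with
  | zero => simp
  | succ a ih =>
    have hrec : m.choose (k + a + 1) * (k + a + 1) = m.choose (k + a) * (m - (k + a)) :=
      choose_succ_right_eq m (k + a)
    calc m.choose (k + (a + 1)) * (a + 1 + 1)!
        = m.choose (k + a + 1) * (a + 2) * (a + 1)! := by rw [factorial_succ (a + 1)]; ring_nf
      _ ≤ m.choose (k + a + 1) * (k + a + 1) * (a + 1)! :=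
        Nat.mul_le_mul_right _ (Nat.mul_le_mul_left _ (by omega))
      _ = m.choose (k + a) * (a + 1)! * (m - (k + a)) := by rw [hrec]; ring
      _ ≤ m.choose k * (m - k) ^ a * (m - k) := by gcongr; omega
      _ = m.choose k * (m - k) ^ (a + 1) := by ring

theorem Nat.four_mul_mul_sub_le_sq {i m k : ℕ} (hk : 1 ≤ k) (hkm : k ≤ m) :
    4 * (i * (m - k)) ≤ (i + m - 1) ^ 2 :=
  calc 4 * (i * (m - k)) ≤ (i + (m - k)) ^ 2 := by rw [← mul_assoc]; exact four_mul_le_sq_add _ _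
    _ ≤ (i + m - 1) ^ 2 := by gcongr; omega

theorem choose_mul_choose_add_le {i m k : ℕ} (hk : 1 ≤ k) (a : ℕ) :
    (i.choose a * m.choose (k + a) : ℝ) ≤
      m.choose k * ((i * (m - k) : ℕ) : ℝ) ^ a / (a ! * (a + 1)!) := by
  have hi : (i.choose a : ℝ) ≤ i ^ a / a ! := choose_le_pow_div a i
  have hm : (m.choose (k + a) : ℝ) ≤ m.choose k * ((m - k : ℕ) : ℝ) ^ a / (a + 1)! := by
    rw [le_div_iff₀ (by positivity)]
    exact_mod_cast choose_add_mul_factorial_succ_le hk a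
  calc (i.choose a * m.choose (k + a) : ℝ)
      ≤ i ^ a / a ! * (m.choose k * ((m - k : ℕ) : ℝ) ^ a / (a + 1)!) := by gcongr
    _ = m.choose k * ((i * (m - k) : ℕ) : ℝ) ^ a / (a ! * (a + 1)!) := by push_cast; ring

theorem mutProb_add_eq_sum (n i k : ℕ) :
    mutProb n i (i + k) = ∑ a ∈ range (n + 1),
      (i.choose a * (n - i).choose (k + a) : ℝ) *
        (1 / n) ^ (k + 2 * a) * (1 - 1 / n) ^ (n - (k + 2 * a)) := by
  refine sum_congr rfl fun a _ => ?_
  rw [if_pos (by omega), show i + k + a - i = k + a by omega, show a + (k + a) = k + 2 * a by omega]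

theorem choose_mul_choose_mul_pow_le {n i k : ℕ} (hk : 1 ≤ k) (hkn : k ≤ n - i)
    {p : ℝ} (hp : 0 ≤ p) (hpn : n * p ≤ 1) (a : ℕ) :
    (i.choose a * (n - i).choose (k + a) : ℝ) * p ^ (k + 2 * a) * (1 - p) ^ (n - (k + 2 * a)) ≤
      (n - i).choose k * p ^ k * (1 - p) ^ (n - k) * ((1 / 4) ^ a / (a ! * (a + 1)!)) := by
  have hn : (1 : ℝ) ≤ n := by exact_mod_cast (show 1 ≤ n by omega)
  have hq0 : 0 ≤ 1 - p := by nlinarith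
  have hq1 : 1 - p ≤ 1 := by linarith
  set q := 1 - p with hq_def
  have amgm : ((i * (n - i - k) : ℕ) : ℝ) * p ^ 2 ≤ q ^ 2 / 4 := by
    have h := four_mul_mul_sub_le_sq (i := i) hk hkn
    rw [show i + (n - i) - 1 = n - 1 by omega] at h
    have hR : 4 * ((i * (n - i - k) : ℕ) : ℝ) ≤ ((n : ℝ) - 1) ^ 2 := by
      rw [← Nat.cast_one, ← Nat.cast_sub (by omega)]; exact_mod_cast h
    have hpq : ((n : ℝ) - 1) * p ≤ q := by linarith
    nlinarith [mul_le_mul hpq hpq (by nlinarith) hq0]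
  have hq : q ^ (n - (k + 2 * a)) * q ^ (2 * a) ≤ q ^ (n - k) := by
    rw [← pow_add]; exact pow_le_pow_of_le_one hq0 hq1 (by omega)
  calc (i.choose a * (n - i).choose (k + a) : ℝ) * p ^ (k + 2 * a) * q ^ (n - (k + 2 * a))
      ≤ (n - i).choose k * ((i * (n - i - k) : ℕ) : ℝ) ^ a / (a ! * (a + 1)!) *
          p ^ (k + 2 * a) * q ^ (n - (k + 2 * a)) := by
        gcongr; exact choose_mul_choose_add_le hk a
    _ = (n - i).choose k * p ^ k / (a ! * (a + 1)!) *
          (((i * (n - i - k) : ℕ) : ℝ) * p ^ 2) ^ a * q ^ (n - (k + 2 * a)) := by ring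
    _ ≤ (n - i).choose k * p ^ k / (a ! * (a + 1)!) *
          (q ^ 2 / 4) ^ a * q ^ (n - (k + 2 * a)) := by gcongr
    _ = (n - i).choose k * p ^ k * ((1 / 4) ^ a / (a ! * (a + 1)!)) *
          (q ^ (n - (k + 2 * a)) * q ^ (2 * a)) := by rw [div_pow, ← pow_mul, one_div_pow]; ring
    _ ≤ (n - i).choose k * p ^ k * q ^ (n - k) * ((1 / 4) ^ a / (a ! * (a + 1)!)) := by
        rw [mul_right_comm]; gcongr

/-- The tail `∑_{a ≥ N}` is at most `(1/4)^N / 9`, because `a! (a + 1)! ≥ 12` for `a ≥ 2`. -/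
theorem sum_range_quarter_pow_div_factorial_mul_add_tail_le {N : ℕ} (hN : 2 ≤ N) :
    ∑ a ∈ range N, (1 / 4 : ℝ) ^ a / (a ! * (a + 1)!) + (1 / 4) ^ N / 9 ≤ 163 / 144 := by
  induction N, hN using Nat.le_induction with
  | base => norm_num [sum_range_succ, factorial]
  | succ N hN ih =>
    have hfac : (12 : ℝ) ≤ N ! * (N + 1)! := by
      have h : 2 * 6 ≤ N ! * (N + 1)! :=
        Nat.mul_le_mul (factorial_le hN) (factorial_le (show 3 ≤ N + 1 by omega))
      exact_mod_cast h
    have hterm : (1 / 4 : ℝ) ^ N / (N ! * (N + 1)!) ≤ (1 / 4) ^ N / 12 :=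
      div_le_div_of_nonneg_left (by positivity) (by norm_num) hfac
    rw [sum_range_succ, pow_succ]
    linarith

theorem sum_range_quarter_pow_div_factorial_mul_le (N : ℕ) :
    ∑ a ∈ range N, (1 / 4 : ℝ) ^ a / (a ! * (a + 1)!) ≤ 163 / 144 :=
  calc ∑ a ∈ range N, (1 / 4 : ℝ) ^ a / (a ! * (a + 1)!)
      ≤ ∑ a ∈ range (N + 2), (1 / 4 : ℝ) ^ a / (a ! * (a + 1)!) :=
        sum_le_sum_of_subset_of_nonneg (range_mono (by omega)) fun _ _ _ => by positivity
    _ ≤ 163 / 144 := by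
        linarith [sum_range_quarter_pow_div_factorial_mul_add_tail_le (N := N + 2) (by omega),
          show (0 : ℝ) ≤ (1 / 4) ^ (N + 2) / 9 by positivity]

theorem mut_increase_upper_bound_general (n i k : ℕ) (hi : i ≤ n)
    (hk : 1 ≤ k) (hkn : k ≤ n - i) :
    mutProb n i (i + k) ≤
      (((n : ℝ) - i) / n) ^ k * (1 - 1 / n) ^ (n - k) * (1.14 / Nat.factorial k) := by
  have hp : (0 : ℝ) ≤ 1 / n := by positivity
  have hpn : (n : ℝ) * (1 / n) ≤ 1 := by
    rw [mul_one_div]; exact div_self_le_one _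
  have hq : (0 : ℝ) ≤ 1 - 1 / n :=
    sub_nonneg.2 (div_le_one_of_le₀ (by exact_mod_cast (show 1 ≤ n by omega)) n.cast_nonneg)
  calc mutProb n i (i + k)
      ≤ ∑ a ∈ range (n + 1), (n - i).choose k * (1 / n : ℝ) ^ k * (1 - 1 / n) ^ (n - k) *
          ((1 / 4) ^ a / (a ! * (a + 1)!)) := by
        rw [mutProb_add_eq_sum]
        exact sum_le_sum fun a _ => choose_mul_choose_mul_pow_le hk hkn hp hpn a
    _ ≤ (n - i).choose k * (1 / n : ℝ) ^ k * (1 - 1 / n) ^ (n - k) * (163 / 144) := by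
        rw [← mul_sum]; gcongr; exact sum_range_quarter_pow_div_factorial_mul_le _
    _ ≤ ((n - i : ℕ) : ℝ) ^ k / k ! * (1 / n : ℝ) ^ k * (1 - 1 / n) ^ (n - k) * 1.14 := by
        gcongr
        · exact choose_le_pow_div k (n - i)
        · norm_num
    _ = (((n : ℝ) - i) / n) ^ k * (1 - 1 / n) ^ (n - k) * (1.14 / k !) := by
        rw [Nat.cast_sub hi, div_pow ((n : ℝ) - i)]; ring

theorem mut_increase_upper_bound (n i k : ℕ) (hn : 2 ≤ n) (hi : i ≤ n)
    (hk : 1 ≤ k) (hkn : k ≤ n - i) :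
    mutProb n i (i + k) ≤
      (((n : ℝ) - i) / n) ^ k * (1 - 1 / n) ^ (n - k) * (1.14 / Nat.factorial k) :=
  mut_increase_upper_bound_general n i k hi hk hkn
end

section
/- For every n ≥ 2 and all integers 0 ≤ i ≤ n and k ≥ 1 with k ≤ i, the symmetry mut(i, i−k) = mut(n−i, n−i+k) holds, and consequently mut(i, i−k) ≤ (i/n)^k · (1 − 1/n)^{n−k} · 1.14/k!. -/
/-! Let `b` be the number of zeros that flip. Losing `k` ones means flipping `b + k` of the
`i` ones and `b` of the `n - i` zeros; exchanging the roles of ones and zeros, these are exactly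
the terms of gaining `k` ones from `n - i` ones. For the bound,
`(b + 1) C(i, b + k) ≤ C(i, k) C(i - k, b)`, `C(m, r) ≤ m ^ r / r!` and AM-GM
`(i - k) (n - i) ≤ (n - 1) ^ 2 / 4` bound the `b`-th term by
`(i / n) ^ k (1 - 1 / n) ^ (n - k) / k!` times `(1 / 4) ^ b / ((b + 1)! b!)`, and these
weights sum to `1 + 1 / 8 + ⋯ < 1.14`. -/

open Finset Nat

/-- The probability that mutation of a string with `x` ones and `y` zeros (`x + y = n`)
flips exactly `a` of the ones and `b` of the zeros. -/
noncomputable def flipProb (n x y a b : ℕ) : ℝ :=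
  (x.choose a : ℝ) * y.choose b * (1 / n) ^ (a + b) * (1 - 1 / n) ^ (n - (a + b))

theorem flipProb_comm (n x y a b : ℕ) : flipProb n x y a b = flipProb n y x b a := by
  simp only [flipProb, add_comm a b, mul_comm (x.choose a : ℝ)]

theorem mutProb_add (n i d : ℕ) :
    mutProb n i (i + d) = ∑ a ∈ range (n + 1), flipProb n i (n - i) a (a + d) := by
  refine sum_congr rfl fun a _ => ?_
  rw [if_pos (by omega), show i + d + a - i = a + d by omega]
  rfl

theorem mutProb_sub {n i d : ℕ} (hd : d ≤ i) (hi : i ≤ n) :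
    mutProb n i (i - d) = ∑ b ∈ range (n + 1), flipProb n i (n - i) (b + d) b := by
  have shift : mutProb n i (i - d) =
      ∑ a ∈ range (n + 1), if d ≤ a then flipProb n i (n - i) (a - d + d) (a - d) else 0 := by
    refine sum_congr rfl fun a _ => ?_
    by_cases had : d ≤ a
    · rw [if_pos (by omega), if_pos had, show i - d + a - i = a - d by omega,
        Nat.sub_add_cancel had]
      rfl
    · rw [if_neg (by omega), if_neg had]
  rw [shift, ← sum_range_add_sum_Ico _ (show d ≤ n + 1 by omega),
    sum_eq_zero fun a ha => if_neg (by simp at ha; omega), zero_add,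
    sum_Ico_eq_sum_range]
  simp only [le_add_iff_nonneg_right, zero_le, if_true, Nat.add_sub_cancel_left]
  refine sum_subset (range_subset_range.2 (by omega)) fun b hb hb' => ?_
  simp only [mem_range] at hb hb'
  simp [flipProb, choose_eq_zero_of_lt (show i < b + d by omega)]

theorem mutProb_sub_eq_mutProb_compl_add {n i d : ℕ} (hd : d ≤ i) (hi : i ≤ n) :
    mutProb n i (i - d) = mutProb n (n - i) (n - i + d) := by
  rw [mutProb_sub hd hi, mutProb_add, Nat.sub_sub_self hi]
  exact sum_congr rfl fun b _ => flipProb_comm ..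

theorem succ_mul_choose_add_le {i k : ℕ} (b : ℕ) (hk : 1 ≤ k) :
    (b + 1) * i.choose (b + k) ≤ i.choose k * (i - k).choose b := by
  have hb : b + 1 ≤ (b + k).choose k := by
    calc b + 1 = (b + 1).choose b := (choose_succ_self_right b).symm
      _ ≤ (b + k).choose b := choose_le_choose b (by omega)
      _ = (b + k).choose k := choose_symm_add
  calc (b + 1) * i.choose (b + k) ≤ (b + k).choose k * i.choose (b + k) :=
        Nat.mul_le_mul_right _ hb
    _ = i.choose k * (i - k).choose b := by
        rw [mul_comm, choose_mul (Nat.le_add_left k b), Nat.add_sub_cancel]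

theorem choose_add_mul_choose_le {i j k : ℕ} (b : ℕ) (hk : 1 ≤ k) :
    (i.choose (b + k) * j.choose b : ℝ) ≤
      i ^ k / k ! * ((((i - k : ℕ) : ℝ) * j) ^ b / ((b + 1)! * b !)) := by
  have h : ((b + 1) * i.choose (b + k) : ℝ) ≤ i.choose k * (i - k).choose b := by
    exact_mod_cast succ_mul_choose_add_le b hk
  calc (i.choose (b + k) * j.choose b : ℝ)
        = (b + 1) * i.choose (b + k) * j.choose b / (b + 1) := by field_simp
    _ ≤ i.choose k * (i - k).choose b * j.choose b / (b + 1) := by gcongr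
    _ ≤ i ^ k / k ! * (((i - k : ℕ) : ℝ) ^ b / b !) * (j ^ b / b !) / (b + 1) := by
        gcongr <;> exact choose_le_pow_div ..
    _ = i ^ k / k ! * ((((i - k : ℕ) : ℝ) * j) ^ b / ((b + 1)! * b !)) := by
        rw [factorial_succ]
        push_cast
        field_simp
        ring

theorem sum_range_quarter_pow_div_factorial_le (m : ℕ) :
    ∑ b ∈ range m, (1 / 4 : ℝ) ^ b / ((b + 1)! * b !) ≤ 1.14 := by
  have tail (b : ℕ) :
      (1 / 4 : ℝ) ^ (b + 1) / ((b + 2)! * (b + 1)!) ≤ 1 / 8 * (1 / 24) ^ b := by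
    have h₁ : (2 * 3 ^ b : ℝ) ≤ (b + 2)! := by
      exact_mod_cast (by simpa [add_comm] using @factorial_mul_pow_le_factorial 2 b)
    have h₂ : (2 ^ b : ℝ) ≤ (b + 1)! := by
      exact_mod_cast (by simpa [add_comm] using @factorial_mul_pow_le_factorial 1 b)
    rw [div_le_iff₀ (by positivity)]
    calc (1 / 4 : ℝ) ^ (b + 1) = 1 / 8 * (1 / 24) ^ b * (2 * 3 ^ b * 2 ^ b) := by
          rw [pow_succ, show (1 / 4 : ℝ) = 1 / 24 * 3 * 2 by norm_num, mul_pow, mul_pow]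
          ring
      _ ≤ 1 / 8 * (1 / 24) ^ b * ((b + 2)! * (b + 1)!) := by gcongr
  rcases m with _ | m
  · norm_num
  rw [sum_range_succ']
  have geom : ∑ b ∈ range m, (1 / 24 : ℝ) ^ b ≤ 24 / 23 := by
    have := geom_sum_Ico_le_of_lt_one (x := (1 / 24 : ℝ)) (m := 0) (n := m) (by norm_num)
      (by norm_num)
    rw [← range_eq_Ico] at this
    norm_num at this ⊢
    exact this
  calc ∑ b ∈ range m, (1 / 4 : ℝ) ^ (b + 1) / ((b + 1 + 1)! * (b + 1)!) +
        (1 / 4) ^ 0 / ((0 + 1)! * 0 !)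
      ≤ ∑ b ∈ range m, 1 / 8 * (1 / 24 : ℝ) ^ b + 1 := by
        gcongr with b
        · exact tail b
        · norm_num
    _ ≤ 1 / 8 * (24 / 23) + 1 := by rw [← mul_sum]; gcongr
    _ ≤ 1.14 := by norm_num

theorem one_sub_one_div_natCast_nonneg (n : ℕ) : (0 : ℝ) ≤ 1 - 1 / n :=
  sub_nonneg.2 (by simpa using Nat.cast_inv_le_one n)

theorem flipProb_le {n i k : ℕ} (b : ℕ) (hk : 1 ≤ k) (hki : k ≤ i) (hi : i ≤ n) :
    flipProb n i (n - i) (b + k) b ≤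
      ((i : ℝ) / n) ^ k * (1 - 1 / n) ^ (n - k) / k ! * ((1 / 4) ^ b / ((b + 1)! * b !)) := by
  have hn0 : (n : ℝ) ≠ 0 := Nat.cast_ne_zero.2 (by omega)
  have hnq : (n : ℝ) * (1 - 1 / n) = n - 1 := by field_simp
  have hq0 := one_sub_one_div_natCast_nonneg n
  unfold flipProb
  generalize (1 : ℝ) - 1 / n = q at hnq hq0 ⊢
  by_cases hb : b + k ≤ i ∧ b ≤ n - i
  · have amgm : ((i - k : ℕ) : ℝ) * (n - i : ℕ) ≤ (n * q) ^ 2 / 4 := by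
      have hsum : ((i - k : ℕ) : ℝ) + (n - i : ℕ) ≤ n * q := by
        rw [hnq, ← Nat.cast_add, show i - k + (n - i) = n - k by omega, Nat.cast_sub (by omega)]
        gcongr
        exact_mod_cast hk
      nlinarith [four_mul_le_sq_add ((i - k : ℕ) : ℝ) (n - i : ℕ)]
    calc (i.choose (b + k) : ℝ) * (n - i).choose b * (1 / n) ^ (b + k + b) * q ^ (n - (b + k + b))
        ≤ i ^ k / k ! * ((((i - k : ℕ) : ℝ) * (n - i : ℕ)) ^ b / ((b + 1)! * b !)) *
            (1 / n) ^ (b + k + b) * q ^ (n - (b + k + b)) := by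
          gcongr ?_ * _ * _
          exact choose_add_mul_choose_le b hk
      _ ≤ i ^ k / k ! * (((n * q) ^ 2 / 4) ^ b / ((b + 1)! * b !)) *
            (1 / n) ^ (b + k + b) * q ^ (n - (b + k + b)) := by
          gcongr
      _ = (i / n) ^ k * q ^ (n - k) / k ! * ((1 / 4) ^ b / ((b + 1)! * b !)) := by
          rw [show n - k = n - (b + k + b) + 2 * b by omega, pow_add]
          simp only [one_div, inv_pow, div_pow]
          field_simp
          ring
  · rcases not_and_or.1 hb with h | h <;>
      simp only [choose_eq_zero_of_lt (not_le.1 h), Nat.cast_zero, zero_mul, mul_zero]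
    <;> exact mul_nonneg
      (div_nonneg (mul_nonneg (by positivity) (pow_nonneg hq0 _)) (by positivity)) (by positivity)

theorem mutProb_sub_le {n i k : ℕ} (hk : 1 ≤ k) (hki : k ≤ i) (hi : i ≤ n) :
    mutProb n i (i - k) ≤ ((i : ℝ) / n) ^ k * (1 - 1 / n) ^ (n - k) * (1.14 / k !) := by
  have hq0 := one_sub_one_div_natCast_nonneg n
  rw [mutProb_sub hki hi]
  calc ∑ b ∈ range (n + 1), flipProb n i (n - i) (b + k) b
      ≤ ∑ b ∈ range (n + 1), ((i : ℝ) / n) ^ k * (1 - 1 / n) ^ (n - k) / k ! *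
          ((1 / 4) ^ b / ((b + 1)! * b !)) :=
        sum_le_sum fun b _ => flipProb_le b hk hki hi
    _ = ((i : ℝ) / n) ^ k * (1 - 1 / n) ^ (n - k) / k ! *
          ∑ b ∈ range (n + 1), (1 / 4 : ℝ) ^ b / ((b + 1)! * b !) := (mul_sum ..).symm
    _ ≤ ((i : ℝ) / n) ^ k * (1 - 1 / n) ^ (n - k) / k ! * 1.14 := by
        gcongr
        exact sum_range_quarter_pow_div_factorial_le _
    _ = ((i : ℝ) / n) ^ k * (1 - 1 / n) ^ (n - k) * (1.14 / k !) := by ring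

theorem mut_decrease_symm_and_upper_bound_general (n i k : ℕ) (hi : i ≤ n)
    (hk : 1 ≤ k) (hki : k ≤ i) :
    mutProb n i (i - k) = mutProb n (n - i) (n - i + k) ∧
    mutProb n i (i - k) ≤
      ((i : ℝ) / n) ^ k * (1 - 1 / n) ^ (n - k) * (1.14 / Nat.factorial k) :=
  ⟨mutProb_sub_eq_mutProb_compl_add hki hi, mutProb_sub_le hk hki hi⟩

theorem mut_decrease_symm_and_upper_bound (n i k : ℕ) (hn : 2 ≤ n) (hi : i ≤ n)
    (hk : 1 ≤ k) (hki : k ≤ i) :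
    mutProb n i (i - k) = mutProb n (n - i) (n - i + k) ∧
    mutProb n i (i - k) ≤
      ((i : ℝ) / n) ^ k * (1 - 1 / n) ^ (n - k) * (1.14 / Nat.factorial k) :=
  mut_decrease_symm_and_upper_bound_general n i k hi hk hki
end

section
/- For every n ≥ 2 and all integers 0 ≤ i < j ≤ n, the conditional probability of mutating a string with i ones to one with exactly j ones, given that the result has at least j ones, is at least one half: mut(i, j) / (∑_{k=j}^{n} mut(i, k)) ≥ 1/2. -/
/-! For `k > i`, compare the summands of `mutProb n i (k + 1)` and `mutProb n i k` with the same
number `a` of flipped 1-bits: one more 0-bit flips, so with `m = k + a - i ≥ 1` the ratio is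
`C(n-i, m+1) / C(n-i, m) · (1/n) / (1 - 1/n) = (n-i-m) / ((m+1)(n-1)) ≤ 1/2`.
Hence `k ↦ mutProb n i k` at least halves at each step beyond `i`, the tail `∑_{k ≥ j}` is at most
twice its first term, and the first term is positive. -/

open Finset

lemma two_mul_choose_succ_le {N m : ℕ} (hm : 1 ≤ m) :
    2 * N.choose (m + 1) ≤ (N - m) * N.choose m := by
  have h := Nat.choose_succ_right_eq N m
  refine Nat.le_of_mul_le_mul_left ?_ (show 0 < m + 1 by omega)
  calc (m + 1) * (2 * N.choose (m + 1)) = 2 * (N.choose m * (N - m)) := by rw [← h]; ring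
    _ ≤ (m + 1) * (N.choose m * (N - m)) := by gcongr; omega
    _ = (m + 1) * ((N - m) * N.choose m) := by ring

lemma sum_Icc_le_two_mul_of_le_half {f : ℕ → ℝ} {j n : ℕ}
    (hf : ∀ k, j ≤ k → f (k + 1) ≤ f k / 2) (hfj : 0 ≤ f j) :
    ∑ k ∈ Icc j n, f k ≤ 2 * f j := by
  have hgeom (t : ℕ) : f (j + t) ≤ (1 / 2) ^ t * f j :=
    le_geom (u := fun t ↦ f (j + t)) (by norm_num) t fun k _ ↦ by
      simpa [← add_assoc, div_eq_inv_mul] using hf (j + k) (by omega)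
  calc ∑ k ∈ Icc j n, f k = ∑ t ∈ range (n + 1 - j), f (j + t) := by
        rw [← Ico_add_one_right_eq_Icc, sum_Ico_eq_sum_range]
    _ ≤ ∑ t ∈ range (n + 1 - j), (1 / 2) ^ t * f j := sum_le_sum fun t _ ↦ hgeom t
    _ = (∑ t ∈ range (n + 1 - j), (1 / 2 : ℝ) ^ t) * f j := by rw [sum_mul]
    _ ≤ 2 * f j := mul_le_mul_of_nonneg_right (sum_geometric_two_le _) hfj

section MutationProbability

variable {n : ℕ}

lemma one_sub_one_div_nonneg (n : ℕ) : 0 ≤ 1 - 1 / (n : ℝ) := by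
  rw [sub_nonneg, one_div]
  exact Nat.cast_inv_le_one n

lemma choose_mul_pow_succ_le_half {N a m : ℕ} (hm : 1 ≤ m) (hN : N ≤ n - a) :
    (N.choose (m + 1) : ℝ) * (1 / n) ^ (a + (m + 1)) * (1 - 1 / n) ^ (n - (a + (m + 1))) ≤
      N.choose m * (1 / n) ^ (a + m) * (1 - 1 / n) ^ (n - (a + m)) / 2 := by
  have hq := one_sub_one_div_nonneg n
  rcases lt_or_ge N (m + 1) with hNm | hNm
  · rw [Nat.choose_eq_zero_of_lt hNm, Nat.cast_zero, zero_mul, zero_mul]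
    bound
  have hq_eq : 1 - 1 / (n : ℝ) = (n - 1) * (1 / n) := by
    have : (n : ℝ) ≠ 0 := Nat.cast_ne_zero.mpr (by omega)
    field_simp
  have hchoose : 2 * (N.choose (m + 1) : ℝ) ≤ (n - 1) * N.choose m := by
    have h := two_mul_choose_succ_le (N := N) hm
    have : N - m ≤ n - 1 := by omega
    calc 2 * (N.choose (m + 1) : ℝ) ≤ ((N - m : ℕ) : ℝ) * N.choose m := by exact_mod_cast h
      _ ≤ ((n - 1 : ℕ) : ℝ) * N.choose m := by gcongr
      _ = (n - 1) * N.choose m := by rw [Nat.cast_sub (by omega), Nat.cast_one]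
  obtain ⟨r, hr⟩ : ∃ r, n - (a + m) = r + 1 := ⟨n - (a + m + 1), by omega⟩
  have hr' : n - (a + (m + 1)) = r := by omega
  have hX : 0 ≤ (1 / n : ℝ) ^ (a + m) * (1 - 1 / n) ^ r * (1 / n) / 2 := by bound
  calc _ = 2 * (N.choose (m + 1) : ℝ) * ((1 / n : ℝ) ^ (a + m) * (1 - 1 / n) ^ r * (1 / n) / 2) := by
        rw [hr', ← add_assoc, pow_succ]; ring
    _ ≤ (n - 1) * N.choose m * ((1 / n : ℝ) ^ (a + m) * (1 - 1 / n) ^ r * (1 / n) / 2) :=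
        mul_le_mul_of_nonneg_right hchoose hX
    _ = _ := by rw [hr, pow_succ, hq_eq]; ring

lemma mutProb_nonneg (n i j : ℕ) : 0 ≤ mutProb n i j := by
  have hq := one_sub_one_div_nonneg n
  exact sum_nonneg fun a _ ↦ by split_ifs <;> bound

lemma mutProb_pos {i j : ℕ} (hn : 2 ≤ n) (hij : i ≤ j) (hj : j ≤ n) : 0 < mutProb n i j := by
  have hq : 0 < 1 - 1 / (n : ℝ) := by
    rw [sub_pos, div_lt_one (by positivity)]
    exact_mod_cast hn
  have hq' := hq.le
  refine sum_pos' (fun a _ ↦ by split_ifs <;> bound) ⟨0, by simp, ?_⟩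
  rw [if_pos (by omega)]
  have : 0 < (n - i).choose (j + 0 - i) := Nat.choose_pos (by omega)
  bound

lemma mutProb_succ_le_half {i k : ℕ} (hik : i < k) :
    mutProb n i (k + 1) ≤ mutProb n i k / 2 := by
  unfold mutProb
  rw [sum_div]
  refine sum_le_sum fun a _ ↦ ?_
  rw [if_pos (by omega), if_pos (by omega)]
  rcases lt_or_ge i a with hia | hai
  · simp [Nat.choose_eq_zero_of_lt hia]
  rw [show k + 1 + a - i = k + a - i + 1 by omega]
  have h := mul_le_mul_of_nonneg_left
    (choose_mul_pow_succ_le_half (n := n) (N := n - i) (a := a) (m := k + a - i) (by omega) (by omega))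
    (Nat.cast_nonneg (α := ℝ) (i.choose a))
  convert h using 1 <;> ring

end MutationProbability

theorem mut_conditional_at_least_half (n i j : ℕ) (hn : 2 ≤ n) (hij : i < j)
    (hj : j ≤ n) :
    1 / 2 ≤ mutProb n i j / ∑ k ∈ Finset.Icc j n, mutProb n i k := by
  have hpos : 0 < mutProb n i j := mutProb_pos hn hij.le hj
  have hsum : ∑ k ∈ Icc j n, mutProb n i k ≤ 2 * mutProb n i j :=
    sum_Icc_le_two_mul_of_le_half (fun _ hk ↦ mutProb_succ_le_half (hij.trans_le hk)) hpos.le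
  have hsum_pos : 0 < ∑ k ∈ Icc j n, mutProb n i k :=
    hpos.trans_le <| single_le_sum (fun k _ ↦ mutProb_nonneg n i k) (by simp [hj])
  rw [le_div_iff₀ hsum_pos]
  linarith
end

section
/- For every constant ε with 0 < ε < 1 there exist constants c > 0, c′ > 0, and n₀ such that for all n ≥ n₀, every β > 0, and every positive integer N with 1 ≤ Nβ ≤ ((1−ε)/2)·ln n, the optimisation time T of SSWM (with either local or global mutations, initialised uniformly at random in {0,1}^n) on OneMax satisfies P(T < 2^{c·n^{ε/2}}) ≤ 2^{−c′·n^{ε/2}}. -/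
open scoped ENNReal

/-- Number of ones of a bit string. -/
def oneMax {n : ℕ} (x : Fin n → Bool) : ℕ := (Finset.univ.filter fun i => x i).card

/-- Hamming distance between bit strings. -/
def hamming {n : ℕ} (x y : Fin n → Bool) : ℕ :=
  (Finset.univ.filter fun i => x i ≠ y i).card

/-- Global (standard bit) mutation: each of the `n` bits flips independently with
probability `1/n`; `globalMut n x y` is the probability that `x` mutates into `y`. -/
noncomputable def globalMut (n : ℕ) (x y : Fin n → Bool) : ℝ :=
  (1 / n) ^ hamming x y * (1 - 1 / n) ^ (n - hamming x y)

/-- Local mutation: flip a single uniformly random bit. -/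
noncomputable def localMut (n : ℕ) (x y : Fin n → Bool) : ℝ :=
  if hamming x y = 1 then 1 / n else 0

/-- One step of SSWM with fitness `f`: propose `y` with probability `mutK x y`,
accept it with probability `p_fix(f(y) − f(x))`, otherwise stay at `x`. -/
noncomputable def sswmKernel {n : ℕ} (β N : ℝ)
    (mutK : (Fin n → Bool) → (Fin n → Bool) → ℝ)
    (f : (Fin n → Bool) → ℝ) (x y : Fin n → Bool) : ℝ :=
  mutK x y * pfix β N (f y - f x) +
    if y = x then ∑ z, mutK x z * (1 - pfix β N (f z - f x)) else 0

open Classical in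
/-- The kernel `K` made absorbing on the set of optima `opt`. -/
noncomputable def absorb {n : ℕ} (opt : (Fin n → Bool) → Prop)
    (K : (Fin n → Bool) → (Fin n → Bool) → ℝ) (x y : Fin n → Bool) : ℝ :=
  if opt x then (if y = x then 1 else 0) else K x y

/-- Distribution of the chain with transition kernel `K` and initial distribution `μ0`
after `t` steps. -/
noncomputable def walk {n : ℕ} (K : (Fin n → Bool) → (Fin n → Bool) → ℝ)
    (μ0 : (Fin n → Bool) → ℝ) : ℕ → (Fin n → Bool) → ℝ
  | 0 => μ0
  | t + 1 => fun y => ∑ x, walk K μ0 t x * K x y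

open Classical in
/-- `hitProb opt K μ0 t` is the probability that the chain with one-step kernel `K`,
started from `μ0` and absorbed in `opt`, has reached `opt` within `t` steps, i.e. the
probability `P(T ≤ t)` where `T` is the optimisation time. -/
noncomputable def hitProb {n : ℕ} (opt : (Fin n → Bool) → Prop)
    (K : (Fin n → Bool) → (Fin n → Bool) → ℝ)
    (μ0 : (Fin n → Bool) → ℝ) (t : ℕ) : ℝ :=
  ∑ x, if opt x then walk (absorb opt K) μ0 t x else 0

/-- Expected optimisation time `E[T] = ∑_{t≥0} P(T > t)`. -/
noncomputable def expectedTime {n : ℕ} (opt : (Fin n → Bool) → Prop)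
    (K : (Fin n → Bool) → (Fin n → Bool) → ℝ)
    (μ0 : (Fin n → Bool) → ℝ) : ℝ≥0∞ :=
  ∑' t : ℕ, ENNReal.ofReal (1 - hitProb opt K μ0 t)

/-- Point mass at `x0`. -/
noncomputable def dirac {n : ℕ} (x0 : Fin n → Bool) : (Fin n → Bool) → ℝ :=
  fun x => if x = x0 then 1 else 0

/-- Uniform initial distribution on `{0,1}^n`. -/
noncomputable def uniformInit (n : ℕ) : (Fin n → Bool) → ℝ := fun _ => 1 / 2 ^ n

/-!
The potential `g(x) = 2^{-min(z, m)}`, with `z` the number of zeros of `x` and `m = ⌈3 n^{ε/2}⌉`,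
is `1` exactly at the optimum, so `P(T ≤ t) ≤ E[g(X_t)]`. Within distance `m` of the optimum,
each of the at least `n/2` one-bits is flipped with probability at least `1/(en)` and the flip
is accepted with probability `p_fix(-1) ≥ 2β e^{-2Nβ} ≥ 2β n^{ε-1}`, while improvements by `d`
are accepted with probability at most `4βd` and are rare because few zeros are left; so `g`
does not increase in expectation there. Farther away `g = 2^{-m}` grows by at most `6 · 2^{-m}`
in expectation. Hence `E[g(X_t)] ≤ E[g(X_0)] + 6t · 2^{-m} ≤ 2^{-m} + (3/4)^n + 6t · 2^{-m}`,
which is at most `2^{-n^{ε/2}}` when `t < 2^{n^{ε/2}}`.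
-/

open Finset

lemma pow_le_div_sub_one_mul_pow_sub_one {c : ℝ} (hc : 2 ≤ c) {u : ℕ} (hu : 1 ≤ u) :
    c ^ u ≤ c / (c - 1) * (c ^ u - 1) := by
  have h : c ≤ c ^ u := le_self_pow₀ (by linarith) (by omega)
  rw [div_mul_eq_mul_div, le_div_iff₀ (by linarith)]
  nlinarith

lemma inv_exp_one_le_one_sub_one_div_pow (m : ℕ) :
    (Real.exp 1)⁻¹ ≤ (1 - 1 / (m + 1 : ℝ)) ^ m := by
  rcases m.eq_zero_or_pos with rfl | hm
  · simpa using inv_le_one_of_one_le₀ (Real.one_le_exp zero_le_one)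
  have hm' : (0 : ℝ) < m := by exact_mod_cast hm
  have hbase : 1 - 1 / (m + 1 : ℝ) = (1 + 1 / (m : ℝ))⁻¹ := by
    field_simp
    ring
  have hpow : (1 + 1 / (m : ℝ)) ^ m ≤ Real.exp 1 := by
    calc (1 + 1 / (m : ℝ)) ^ m ≤ Real.exp (1 / m) ^ m :=
          pow_le_pow_left₀ (by positivity) (by linarith [Real.add_one_le_exp (1 / (m : ℝ))]) m
      _ = Real.exp 1 := by rw [← Real.exp_nat_mul]; field_simp
  rw [hbase, inv_pow]
  exact inv_anti₀ (by positivity) hpow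

lemma one_add_div_pow_sub_one_le {a : ℝ} (ha : 0 ≤ a) {k n : ℕ} (hk : a * k ≤ n) :
    (1 + a / n) ^ k - 1 ≤ Real.exp 1 * (a * k / n) := by
  set s := a * k / n with hs
  have hs0 : 0 ≤ s := by positivity
  have hs1 : s ≤ 1 := div_le_one_of_le₀ hk n.cast_nonneg
  have hpow : (1 + a / n) ^ k ≤ Real.exp s := by
    calc (1 + a / n) ^ k ≤ Real.exp (a / n) ^ k :=
          pow_le_pow_left₀ (by positivity) (by linarith [Real.add_one_le_exp (a / n)]) k
      _ = Real.exp s := by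
          rw [← Real.exp_nat_mul, hs]
          ring_nf
  have hexp : Real.exp s * (1 - s) ≤ 1 := by
    calc Real.exp s * (1 - s) ≤ Real.exp s * Real.exp (-s) :=
          mul_le_mul_of_nonneg_left (by linarith [Real.add_one_le_exp (-s)]) (Real.exp_pos s).le
      _ = 1 := by rw [← Real.exp_add, add_neg_cancel, Real.exp_zero]
  nlinarith [Real.exp_le_exp.mpr hs1]

section BitString

variable {n : ℕ} (x y : Fin n → Bool)

def bitFlip (i : Fin n) : Fin n → Bool :=
  Function.update x i (!x i)

@[simp]
lemma bitFlip_apply_self (i : Fin n) : bitFlip x i i = !x i := by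
  simp [bitFlip]

lemma bitFlip_apply_of_ne {i j : Fin n} (h : j ≠ i) : bitFlip x i j = x j :=
  Function.update_of_ne h _ _

lemma bitFlip_injective : Function.Injective (bitFlip x) := by
  intro i j h
  by_contra hij
  have := congrFun h i
  rw [bitFlip_apply_self, bitFlip_apply_of_ne x hij] at this
  cases x i <;> simp at this

lemma oneMax_le : oneMax x ≤ n := by
  simpa [oneMax] using card_filter_le univ fun i => x i = true

lemma card_filter_eq_false : #{i | x i = false} = n - oneMax x := by
  have := card_filter_add_card_filter_not (s := (univ : Finset (Fin n))) fun i => x i = true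
  simp only [Bool.not_eq_true, card_univ, Fintype.card_fin] at this
  unfold oneMax
  omega

lemma oneMax_bitFlip_of_true {i : Fin n} (hi : x i = true) :
    oneMax (bitFlip x i) + 1 = oneMax x := by
  have hset : univ.filter (fun j => bitFlip x i j = true) =
      (univ.filter fun j => x j = true).erase i := by
    ext j
    rcases eq_or_ne j i with rfl | hj
    · simp [hi]
    · simp [bitFlip_apply_of_ne x hj, hj]
  rw [oneMax, oneMax, hset, card_erase_add_one (by simpa using hi)]

lemma oneMax_bitFlip_of_false {i : Fin n} (hi : x i = false) :
    oneMax (bitFlip x i) = oneMax x + 1 := by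
  have hset : univ.filter (fun j => bitFlip x i j = true) =
      insert i (univ.filter fun j => x j = true) := by
    ext j
    rcases eq_or_ne j i with rfl | hj
    · simp [hi]
    · simp [bitFlip_apply_of_ne x hj, hj]
  rw [oneMax, oneMax, hset, card_insert_of_notMem (by simpa using hi)]

lemma hamming_eq_one_iff : hamming x y = 1 ↔ ∃ i, y = bitFlip x i := by
  constructor
  · intro h
    obtain ⟨i, hi⟩ := card_eq_one.mp h
    have hmem : ∀ j, x j ≠ y j ↔ j = i := fun j => by
      simpa using Finset.ext_iff.mp hi j
    refine ⟨i, funext fun j => ?_⟩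
    rcases eq_or_ne j i with rfl | hj
    · have := (hmem j).mpr rfl
      cases hx : x j <;> cases hy : y j <;> simp_all
    · rw [bitFlip_apply_of_ne x hj]
      simpa [eq_comm] using mt (hmem j).mp hj
  · rintro ⟨i, rfl⟩
    have hset : ({j | x j ≠ bitFlip x i j} : Finset (Fin n)) = {i} := by
      ext j
      rcases eq_or_ne j i with rfl | hj
      · simp
      · simp [bitFlip_apply_of_ne x hj, hj]
    rw [hamming, hset, card_singleton]

lemma filter_hamming_eq_one :
    ({y | hamming x y = 1} : Finset (Fin n → Bool)) = univ.image (bitFlip x) := by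
  ext y
  simp [hamming_eq_one_iff, eq_comm]

def upCount : ℕ := #{i | x i = false ∧ y i = true}

lemma oneMax_le_oneMax_add_upCount : oneMax y ≤ oneMax x + upCount x y := by
  have hsub : univ.filter (fun i => y i = true) ⊆
      univ.filter (fun i => x i = true) ∪ univ.filter (fun i => x i = false ∧ y i = true) := by
    intro i
    cases x i <;> simp_all
  exact (card_le_card hsub).trans (card_union_le _ _)

end BitString

/-- The moment bound is the one of standard bit mutation; local mutation satisfies it by
Bernoulli's inequality. -/
structure IsOneMaxMutation (n : ℕ) (mutK : (Fin n → Bool) → (Fin n → Bool) → ℝ) : Prop where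
  nonneg : ∀ x y, 0 ≤ mutK x y
  sum_eq_one : ∀ x, ∑ y, mutK x y = 1
  sum_improving_mul_pow_le : ∀ c : ℝ, 2 ≤ c → ∀ x,
    ∑ y ∈ univ.filter (fun y => oneMax x < oneMax y), mutK x y * c ^ (oneMax y - oneMax x)
      ≤ c / (c - 1) * ((1 + (c - 1) / n) ^ (n - oneMax x) - 1)
  one_div_exp_one_mul_le_bitFlip : ∀ x i, 1 / (Real.exp 1 * n) ≤ mutK x (bitFlip x i)

namespace IsOneMaxMutation

variable {n : ℕ} {mutK : (Fin n → Bool) → (Fin n → Bool) → ℝ}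

lemma sum_improving_mul_pow_le_exp (hmut : IsOneMaxMutation n mutK) {c : ℝ} (hc : 2 ≤ c)
    (x : Fin n → Bool) (hk : (c - 1) * (n - oneMax x : ℕ) ≤ n) :
    ∑ y ∈ univ.filter (fun y => oneMax x < oneMax y), mutK x y * c ^ (oneMax y - oneMax x)
      ≤ c * Real.exp 1 * (n - oneMax x : ℕ) / n := by
  calc _ ≤ c / (c - 1) * ((1 + (c - 1) / n) ^ (n - oneMax x) - 1) :=
        hmut.sum_improving_mul_pow_le c hc x
    _ ≤ c / (c - 1) * (Real.exp 1 * ((c - 1) * (n - oneMax x : ℕ) / n)) :=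
        mul_le_mul_of_nonneg_left (one_add_div_pow_sub_one_le (by linarith) hk)
          (div_nonneg (by linarith) (by linarith))
    _ = c * Real.exp 1 * (n - oneMax x : ℕ) / n := by
        field_simp [show c - 1 ≠ 0 by linarith]

end IsOneMaxMutation

section Mutation

variable {n : ℕ} (x y : Fin n → Bool)

lemma globalMut_eq_prod :
    globalMut n x y = ∏ i, if x i = y i then 1 - 1 / (n : ℝ) else 1 / n := by
  have hcard := card_filter_add_card_filter_not (s := (univ : Finset (Fin n))) fun i => x i = y i
  rw [card_univ, Fintype.card_fin] at hcard
  rw [prod_ite, prod_const, prod_const, globalMut, mul_comm]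
  congr 2
  simp only [hamming, ne_eq]
  omega

lemma globalMut_nonneg : 0 ≤ globalMut n x y := by
  have h : 1 / (n : ℝ) ≤ 1 := by simpa using Nat.cast_inv_le_one n
  unfold globalMut
  exact mul_nonneg (pow_nonneg (by positivity) _) (pow_nonneg (by linarith) _)

/-- The number of zeros flipped by standard bit mutation is `Bin(n − |x|, 1/n)`; this is the
moment generating function of that binomial. -/
lemma sum_globalMut_mul_pow_upCount (c : ℝ) :
    ∑ y, globalMut n x y * c ^ upCount x y = (1 + (c - 1) / n) ^ (n - oneMax x) := by
  have hfactor : ∀ y : Fin n → Bool, globalMut n x y * c ^ upCount x y =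
      ∏ i, (if x i = y i then 1 - 1 / (n : ℝ) else 1 / n) *
        (if x i = false ∧ y i = true then c else 1) := fun y => by
    rw [prod_mul_distrib, ← globalMut_eq_prod, prod_ite, prod_const, prod_const, one_pow, mul_one,
      upCount]
  have hcoord : ∀ i, ∑ b, (if x i = b then 1 - 1 / (n : ℝ) else 1 / n) *
      (if x i = false ∧ b = true then c else 1) =
      if x i = false then 1 + (c - 1) / n else 1 := fun i => by
    cases x i
    · simp
      ring
    · simp
  simp_rw [hfactor]
  rw [← Fintype.prod_sum fun i b => (if x i = b then 1 - 1 / (n : ℝ) else 1 / n) *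
    (if x i = false ∧ b = true then c else 1)]
  simp_rw [hcoord]
  rw [prod_ite, prod_const, prod_const, one_pow, mul_one, card_filter_eq_false]

lemma sum_globalMut : ∑ y, globalMut n x y = 1 := by
  simpa using sum_globalMut_mul_pow_upCount x 1

lemma globalMut_sum_improving_mul_pow_le {c : ℝ} (hc : 2 ≤ c) :
    ∑ y ∈ univ.filter (fun y => oneMax x < oneMax y), globalMut n x y * c ^ (oneMax y - oneMax x)
      ≤ c / (c - 1) * ((1 + (c - 1) / n) ^ (n - oneMax x) - 1) := by
  have hc0 : 0 ≤ c / (c - 1) := div_nonneg (by linarith) (by linarith)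
  have hterm : ∀ y, 0 ≤ c / (c - 1) * (globalMut n x y * (c ^ upCount x y - 1)) := fun y =>
    mul_nonneg hc0 (mul_nonneg (globalMut_nonneg x y)
      (sub_nonneg.mpr (one_le_pow₀ (by linarith))))
  calc ∑ y ∈ univ.filter (fun y => oneMax x < oneMax y), globalMut n x y * c ^ (oneMax y - oneMax x)
      ≤ ∑ y ∈ univ.filter (fun y => oneMax x < oneMax y),
          c / (c - 1) * (globalMut n x y * (c ^ upCount x y - 1)) := by
        refine sum_le_sum fun y hy => ?_
        have hlt : oneMax x < oneMax y := (mem_filter.mp hy).2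
        have hup := oneMax_le_oneMax_add_upCount x y
        calc globalMut n x y * c ^ (oneMax y - oneMax x)
            ≤ globalMut n x y * (c / (c - 1) * (c ^ upCount x y - 1)) :=
              mul_le_mul_of_nonneg_left
                ((pow_le_pow_right₀ (by linarith) (by omega)).trans
                  (pow_le_div_sub_one_mul_pow_sub_one hc (by omega)))
                (globalMut_nonneg x y)
          _ = c / (c - 1) * (globalMut n x y * (c ^ upCount x y - 1)) := by ring
    _ ≤ ∑ y, c / (c - 1) * (globalMut n x y * (c ^ upCount x y - 1)) :=
        sum_le_sum_of_subset_of_nonneg (subset_univ _) fun y _ _ => hterm y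
    _ = c / (c - 1) * ((1 + (c - 1) / n) ^ (n - oneMax x) - 1) := by
        simp_rw [← mul_sum, mul_sub, mul_one, sum_sub_distrib, sum_globalMut_mul_pow_upCount,
          sum_globalMut]
        ring

lemma one_div_exp_one_mul_le_globalMut_bitFlip (hn : 0 < n) (i : Fin n) :
    1 / (Real.exp 1 * n) ≤ globalMut n x (bitFlip x i) := by
  obtain ⟨m, rfl⟩ : ∃ m, n = m + 1 := ⟨n - 1, by omega⟩
  have hflip : hamming x (bitFlip x i) = 1 := (hamming_eq_one_iff x _).mpr ⟨i, rfl⟩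
  rw [globalMut, hflip, pow_one, Nat.add_sub_cancel, one_div, mul_inv, mul_comm, one_div]
  push_cast
  exact mul_le_mul_of_nonneg_left
    (by simpa only [one_div] using inv_exp_one_le_one_sub_one_div_pow m) (by positivity)

lemma localMut_nonneg : 0 ≤ localMut n x y := by
  unfold localMut
  split <;> positivity

lemma sum_localMut (hn : 0 < n) : ∑ y, localMut n x y = 1 := by
  simp only [localMut]
  rw [← sum_filter, filter_hamming_eq_one, sum_image fun i _ j _ h => bitFlip_injective x h,
    sum_const, card_univ, Fintype.card_fin, nsmul_eq_mul]
  field_simp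

lemma localMut_sum_improving_mul_pow_le {c : ℝ} (hc : 2 ≤ c) :
    ∑ y ∈ univ.filter (fun y => oneMax x < oneMax y), localMut n x y * c ^ (oneMax y - oneMax x)
      ≤ c / (c - 1) * ((1 + (c - 1) / n) ^ (n - oneMax x) - 1) := by
  have hset : (univ.filter fun y => oneMax x < oneMax y).filter (fun y => hamming x y = 1) =
      (univ.filter fun i => x i = false).image (bitFlip x) := by
    ext y
    simp only [mem_filter, mem_univ, true_and, mem_image, hamming_eq_one_iff]
    constructor
    · rintro ⟨hlt, i, rfl⟩
      refine ⟨i, ?_, rfl⟩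
      cases hi : x i
      · rfl
      · have := oneMax_bitFlip_of_true x hi
        omega
    · rintro ⟨i, hi, rfl⟩
      exact ⟨by rw [oneMax_bitFlip_of_false x hi]; omega, i, rfl⟩
  have hsum : ∑ y ∈ univ.filter (fun y => oneMax x < oneMax y),
      localMut n x y * c ^ (oneMax y - oneMax x) = (n - oneMax x : ℕ) * (c / n) := by
    simp only [localMut, ite_mul, zero_mul]
    rw [← sum_filter, hset, sum_image fun i _ j _ h => bitFlip_injective x h,
      ← card_filter_eq_false, ← nsmul_eq_mul, ← sum_const]
    refine sum_congr rfl fun i hi => ?_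
    rw [oneMax_bitFlip_of_false x (mem_filter.mp hi).2, Nat.add_sub_cancel_left, pow_one,
      one_div_mul_eq_div]
  have hbernoulli := one_add_mul_le_pow (a := (c - 1) / (n : ℝ))
    (by have : 0 ≤ (c - 1) / (n : ℝ) := div_nonneg (by linarith) n.cast_nonneg; linarith)
    (n - oneMax x)
  rw [hsum]
  calc ((n - oneMax x : ℕ) : ℝ) * (c / n)
      = c / (c - 1) * ((n - oneMax x : ℕ) * ((c - 1) / n)) := by
        field_simp [show c - 1 ≠ 0 by linarith]
    _ ≤ c / (c - 1) * ((1 + (c - 1) / n) ^ (n - oneMax x) - 1) :=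
        mul_le_mul_of_nonneg_left (by linarith) (div_nonneg (by linarith) (by linarith))

lemma one_div_exp_one_mul_le_localMut_bitFlip (i : Fin n) :
    1 / (Real.exp 1 * n) ≤ localMut n x (bitFlip x i) := by
  rw [localMut, if_pos ((hamming_eq_one_iff x _).mpr ⟨i, rfl⟩), one_div, one_div, mul_inv]
  exact mul_le_of_le_one_left (by positivity) (inv_le_one_of_one_le₀ (Real.one_le_exp zero_le_one))

end Mutation

lemma isOneMaxMutation_globalMut {n : ℕ} (hn : 0 < n) : IsOneMaxMutation n (globalMut n) where
  nonneg := globalMut_nonneg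
  sum_eq_one := sum_globalMut
  sum_improving_mul_pow_le _ hc x := globalMut_sum_improving_mul_pow_le x hc
  one_div_exp_one_mul_le_bitFlip x := one_div_exp_one_mul_le_globalMut_bitFlip x hn

lemma isOneMaxMutation_localMut {n : ℕ} (hn : 0 < n) : IsOneMaxMutation n (localMut n) where
  nonneg := localMut_nonneg
  sum_eq_one x := sum_localMut x hn
  sum_improving_mul_pow_le _ hc x := localMut_sum_improving_mul_pow_le x hc
  one_div_exp_one_mul_le_bitFlip := one_div_exp_one_mul_le_localMut_bitFlip

section FixationProbability

variable {β N Δ : ℝ}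

lemma pfix_nonneg (hβ : 0 < β) (hN : 0 < N) : 0 ≤ pfix β N Δ := by
  unfold pfix
  split_ifs with h
  · positivity
  rcases lt_or_gt_of_ne h with hΔ | hΔ
  · exact div_nonneg_of_nonpos (sub_nonpos.mpr (Real.one_le_exp (by nlinarith)))
      (sub_nonpos.mpr (Real.one_le_exp (by nlinarith [mul_pos hN hβ])))
  · exact div_nonneg (sub_nonneg.mpr (Real.exp_le_one_iff.mpr (by nlinarith)))
      (sub_nonneg.mpr (Real.exp_le_one_iff.mpr (by nlinarith [mul_pos hN hβ])))

lemma pfix_le_one (hβ : 0 < β) (hN : 1 ≤ N) : pfix β N Δ ≤ 1 := by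
  unfold pfix
  split_ifs with h
  · exact div_le_one_of_le₀ hN (by linarith)
  have hNβ : 0 ≤ (N - 1) * β := mul_nonneg (by linarith) hβ.le
  rcases lt_or_gt_of_ne h with hΔ | hΔ
  · rw [div_le_one_of_neg (sub_neg.mpr (Real.one_lt_exp_iff.mpr (by nlinarith))),
      sub_le_sub_iff_left, Real.exp_le_exp]
    nlinarith
  · rw [div_le_one (sub_pos.mpr (Real.exp_lt_one_iff.mpr (by nlinarith))),
      sub_le_sub_iff_left, Real.exp_le_exp]
    nlinarith

lemma pfix_le_four_mul (hβ : 0 < β) (hNβ : 1 ≤ N * β) (hΔ : 1 ≤ Δ) : pfix β N Δ ≤ 4 * β * Δ := by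
  rw [pfix, if_neg (by linarith)]
  have hnum : 1 - Real.exp (-2 * β * Δ) ≤ 2 * β * Δ := by
    linarith [Real.add_one_le_exp (-2 * β * Δ)]
  have hden : 1 / 2 ≤ 1 - Real.exp (-2 * N * β * Δ) := by
    have h2 : Real.exp (-2 * N * β * Δ) ≤ Real.exp (-2) := by
      rw [Real.exp_le_exp]
      nlinarith
    have h3 : Real.exp (-2) ≤ 1 / 2 := by
      rw [Real.exp_neg, inv_le_comm₀ (Real.exp_pos _) (by norm_num)]
      linarith [Real.add_one_le_exp 2]
    linarith
  calc (1 - Real.exp (-2 * β * Δ)) / (1 - Real.exp (-2 * N * β * Δ))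
      ≤ 2 * β * Δ / (1 / 2) :=
        div_le_div₀ (by nlinarith) hnum (by norm_num) hden
    _ = 4 * β * Δ := by ring

lemma two_mul_mul_exp_le_pfix_neg_one (hβ : 0 < β) (hN : 0 < N) :
    2 * β * Real.exp (-(2 * N * β)) ≤ pfix β N (-1) := by
  rw [pfix, if_neg (by norm_num), ← neg_div_neg_eq, neg_sub, neg_sub]
  have hden : 0 < Real.exp (2 * N * β) - 1 := by
    linarith [Real.add_one_le_exp (2 * N * β), mul_pos hN hβ]
  calc 2 * β * Real.exp (-(2 * N * β)) = 2 * β / Real.exp (2 * N * β) := by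
        rw [Real.exp_neg, div_eq_mul_inv]
    _ ≤ (Real.exp (2 * β) - 1) / (Real.exp (2 * N * β) - 1) :=
        div_le_div₀ (by linarith [Real.add_one_le_exp (2 * β)])
          (by linarith [Real.add_one_le_exp (2 * β)]) hden (by linarith)
    _ = (Real.exp (-2 * β * -1) - 1) / (Real.exp (-2 * N * β * -1) - 1) := by ring_nf

end FixationProbability

lemma two_mul_mul_rpow_le_mul_pfix_neg_one {n β N ε : ℝ} (hn : 0 < n) (hβ : 0 < β) (hN : 0 < N)
    (hNβ : N * β ≤ (1 - ε) / 2 * Real.log n) :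
    2 * β * n ^ ε ≤ n * pfix β N (-1) := by
  have hexp : n ^ (ε - 1) ≤ Real.exp (-(2 * N * β)) := by
    rw [Real.rpow_def_of_pos hn, Real.exp_le_exp]
    nlinarith
  calc 2 * β * n ^ ε = n * (2 * β * n ^ (ε - 1)) := by
        rw [Real.rpow_sub hn, Real.rpow_one]
        field_simp
    _ ≤ n * pfix β N (-1) :=
        mul_le_mul_of_nonneg_left ((mul_le_mul_of_nonneg_left hexp (by positivity)).trans
          (two_mul_mul_exp_le_pfix_neg_one hβ hN)) hn.le

section SSWM

variable {n : ℕ} {β N : ℝ} {mutK : (Fin n → Bool) → (Fin n → Bool) → ℝ}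
  (f g : (Fin n → Bool) → ℝ) (x : Fin n → Bool)

lemma sum_sswmKernel_mul (hmut : ∑ y, mutK x y = 1) :
    ∑ y, sswmKernel β N mutK f x y * g y =
      g x + ∑ y, mutK x y * pfix β N (f y - f x) * (g y - g x) := by
  simp only [sswmKernel, add_mul, sum_add_distrib, ite_mul, zero_mul, sum_ite_eq', mem_univ,
    if_true, mul_sub, mul_one, sum_sub_distrib, hmut, ← sum_mul]
  ring

lemma sum_sswmKernel (hmut : ∑ y, mutK x y = 1) : ∑ y, sswmKernel β N mutK f x y = 1 := by
  simpa using sum_sswmKernel_mul f (fun _ => 1) x hmut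

lemma sswmKernel_nonneg (hmut : ∀ x y, 0 ≤ mutK x y) (hβ : 0 < β) (hN : 1 ≤ N)
    (y : Fin n → Bool) : 0 ≤ sswmKernel β N mutK f x y := by
  refine add_nonneg (mul_nonneg (hmut x y) (pfix_nonneg hβ (by linarith))) ?_
  split_ifs
  · exact sum_nonneg fun z _ => mul_nonneg (hmut x z) (sub_nonneg.mpr (pfix_le_one hβ hN))
  · exact le_rfl

end SSWM

section MarkovChain

variable {n : ℕ} {K : (Fin n → Bool) → (Fin n → Bool) → ℝ} {μ0 g : (Fin n → Bool) → ℝ}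

lemma walk_nonneg (hK : ∀ x y, 0 ≤ K x y) (hμ : ∀ x, 0 ≤ μ0 x) (t : ℕ) (x : Fin n → Bool) :
    0 ≤ walk K μ0 t x := by
  induction t generalizing x with
  | zero => exact hμ x
  | succ t ih => exact sum_nonneg fun z _ => mul_nonneg (ih z) (hK z x)

lemma sum_walk (hK : ∀ x, ∑ y, K x y = 1) (hμ : ∑ x, μ0 x = 1) (t : ℕ) :
    ∑ x, walk K μ0 t x = 1 := by
  induction t with
  | zero => exact hμ
  | succ t ih =>
    simp only [walk]
    rw [sum_comm]
    simp only [← mul_sum, hK, mul_one, ih]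

lemma sum_walk_mul_le (hK : ∀ x y, 0 ≤ K x y) (hKsum : ∀ x, ∑ y, K x y = 1)
    (hμ : ∀ x, 0 ≤ μ0 x) (hμsum : ∑ x, μ0 x = 1) {η : ℝ}
    (hdrift : ∀ x, ∑ y, K x y * g y ≤ g x + η) (t : ℕ) :
    ∑ x, walk K μ0 t x * g x ≤ ∑ x, μ0 x * g x + t * η := by
  induction t with
  | zero => simp [walk]
  | succ t ih =>
    calc ∑ y, walk K μ0 (t + 1) y * g y = ∑ x, walk K μ0 t x * ∑ y, K x y * g y := by
          simp only [walk, sum_mul, mul_sum, mul_assoc]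
          exact sum_comm
      _ ≤ ∑ x, walk K μ0 t x * (g x + η) :=
          sum_le_sum fun x _ => mul_le_mul_of_nonneg_left (hdrift x) (walk_nonneg hK hμ t x)
      _ = ∑ x, walk K μ0 t x * g x + η := by
          simp only [mul_add, sum_add_distrib, ← sum_mul, sum_walk hKsum hμsum t, one_mul]
      _ ≤ ∑ x, μ0 x * g x + (t + 1 : ℕ) * η := by
          push_cast
          linarith

theorem hitProb_le_of_drift {opt : (Fin n → Bool) → Prop} (hK : ∀ x y, 0 ≤ K x y)
    (hKsum : ∀ x, ∑ y, K x y = 1) (hμ : ∀ x, 0 ≤ μ0 x) (hμsum : ∑ x, μ0 x = 1)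
    (hg : ∀ x, 0 ≤ g x) (hg_opt : ∀ x, opt x → g x = 1) {η : ℝ} (hη : 0 ≤ η)
    (hdrift : ∀ x, ¬ opt x → ∑ y, K x y * g y ≤ g x + η) (t : ℕ) :
    hitProb opt K μ0 t ≤ ∑ x, μ0 x * g x + t * η := by
  classical
  have habs : ∀ x y, 0 ≤ absorb opt K x y := fun x y => by
    unfold absorb
    split_ifs <;> first | exact hK x y | norm_num
  have habs_sum : ∀ x, ∑ y, absorb opt K x y = 1 := fun x => by
    unfold absorb
    split_ifs
    · simp
    · exact hKsum x
  have habs_drift : ∀ x, ∑ y, absorb opt K x y * g y ≤ g x + η := fun x => by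
    by_cases hx : opt x
    · simpa [absorb, hx] using hη
    · simpa [absorb, hx] using hdrift x hx
  calc hitProb opt K μ0 t ≤ ∑ x, walk (absorb opt K) μ0 t x * g x := by
        refine sum_le_sum fun x _ => ?_
        split_ifs with hx
        · rw [hg_opt x hx, mul_one]
        · exact mul_nonneg (walk_nonneg habs hμ t x) (hg x)
    _ ≤ ∑ x, μ0 x * g x + t * η := sum_walk_mul_le habs habs_sum hμ hμsum habs_drift t

end MarkovChain

section Potential

variable {n m : ℕ} (x y : Fin n → Bool)

noncomputable def oneMaxPotential (n m : ℕ) (x : Fin n → Bool) : ℝ :=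
  2⁻¹ ^ min (n - oneMax x) m

lemma oneMaxPotential_nonneg : 0 ≤ oneMaxPotential n m x := by
  unfold oneMaxPotential
  positivity

lemma oneMaxPotential_of_oneMax_eq (h : oneMax x = n) : oneMaxPotential n m x = 1 := by
  simp [oneMaxPotential, h]

lemma oneMaxPotential_of_le (h : m ≤ n - oneMax x) : oneMaxPotential n m x = 2⁻¹ ^ m := by
  rw [oneMaxPotential, min_eq_right h]

lemma oneMaxPotential_le_of_oneMax_le (h : oneMax y ≤ oneMax x) :
    oneMaxPotential n m y ≤ oneMaxPotential n m x := by
  unfold oneMaxPotential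
  exact pow_le_pow_of_le_one (by norm_num) (by norm_num)
    (show min (n - oneMax x) m ≤ min (n - oneMax y) m by omega)

lemma oneMaxPotential_le_two_pow_mul :
    oneMaxPotential n m y ≤ 2 ^ (oneMax y - oneMax x) * oneMaxPotential n m x := by
  have hy := oneMax_le y
  calc oneMaxPotential n m y
      = 2 ^ (oneMax y - oneMax x) * 2⁻¹ ^ (min (n - oneMax y) m + (oneMax y - oneMax x)) := by
        rw [oneMaxPotential, pow_add, mul_left_comm, ← mul_pow]
        norm_num
    _ ≤ 2 ^ (oneMax y - oneMax x) * oneMaxPotential n m x :=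
        mul_le_mul_of_nonneg_left (pow_le_pow_of_le_one (by norm_num) (by norm_num) (by omega))
          (by positivity)

lemma oneMaxPotential_bitFlip_of_true {i : Fin n} (hi : x i = true) (h : n - oneMax x < m) :
    oneMaxPotential n m (bitFlip x i) = 2⁻¹ * oneMaxPotential n m x := by
  have hflip := oneMax_bitFlip_of_true x hi
  have hx := oneMax_le x
  rw [oneMaxPotential, oneMaxPotential, show n - oneMax (bitFlip x i) = n - oneMax x + 1 by omega,
    min_eq_left h, min_eq_left h.le, pow_succ']

lemma sum_uniformInit : ∑ x, uniformInit n x = 1 := by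
  simp [uniformInit]

lemma sum_uniformInit_mul_oneMaxPotential_le :
    ∑ x, uniformInit n x * oneMaxPotential n m x ≤ 2⁻¹ ^ m + (3 / 4) ^ n := by
  have hpot : ∀ x : Fin n → Bool,
      oneMaxPotential n m x ≤ 2⁻¹ ^ m + 2⁻¹ ^ (n - oneMax x) := fun x => by
    have h1 : (0 : ℝ) ≤ 2⁻¹ ^ m := by positivity
    have h2 : (0 : ℝ) ≤ 2⁻¹ ^ (n - oneMax x) := by positivity
    rcases min_cases (n - oneMax x) m with ⟨h, _⟩ | ⟨h, _⟩ <;>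
      rw [oneMaxPotential, h] <;> linarith
  have hzeros : ∑ x : Fin n → Bool, (2⁻¹ : ℝ) ^ (n - oneMax x) = (3 / 2) ^ n := by
    have hprod : ∀ x : Fin n → Bool,
        (2⁻¹ : ℝ) ^ (n - oneMax x) = ∏ i, if x i = false then 2⁻¹ else 1 := fun x => by
      rw [prod_ite, prod_const, prod_const, one_pow, mul_one, card_filter_eq_false]
    simp_rw [hprod]
    rw [← Fintype.prod_sum fun _ (b : Bool) => if b = false then (2⁻¹ : ℝ) else 1]
    norm_num [div_pow]
  calc ∑ x, uniformInit n x * oneMaxPotential n m x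
      ≤ ∑ x, uniformInit n x * (2⁻¹ ^ m + 2⁻¹ ^ (n - oneMax x)) :=
        sum_le_sum fun x _ => mul_le_mul_of_nonneg_left (hpot x) (by simp [uniformInit])
    _ = 2⁻¹ ^ m + (3 / 4) ^ n := by
        have h4 : (4 : ℝ) ^ n = 2 ^ n * 2 ^ n := by rw [← mul_pow]; norm_num
        simp only [uniformInit, ← mul_sum, sum_add_distrib, sum_const, card_univ, hzeros,
          Fintype.card_fun, Fintype.card_bool, Fintype.card_fin, nsmul_eq_mul, div_pow, h4]
        push_cast
        field_simp

end Potential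

section Drift

variable {n m : ℕ} {β N : ℝ} {mutK : (Fin n → Bool) → (Fin n → Bool) → ℝ}
  (x : Fin n → Bool)

noncomputable def driftTerm (β N : ℝ) (mutK : (Fin n → Bool) → (Fin n → Bool) → ℝ) (m : ℕ)
    (x y : Fin n → Bool) : ℝ :=
  mutK x y * pfix β N ((oneMax y : ℝ) - oneMax x) *
    (oneMaxPotential n m y - oneMaxPotential n m x)

lemma driftTerm_nonpos (hmut : IsOneMaxMutation n mutK) (hβ : 0 < β) (hN : 0 < N)
    {y : Fin n → Bool} (hy : oneMax y ≤ oneMax x) : driftTerm β N mutK m x y ≤ 0 :=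
  mul_nonpos_of_nonneg_of_nonpos (mul_nonneg (hmut.nonneg x y) (pfix_nonneg hβ hN))
    (sub_nonpos.mpr (oneMaxPotential_le_of_oneMax_le x y hy))

lemma driftTerm_le (hmut : IsOneMaxMutation n mutK) (hβ : 0 < β) (hN : 0 < N)
    (y : Fin n → Bool) :
    driftTerm β N mutK m x y ≤ mutK x y * pfix β N ((oneMax y : ℝ) - oneMax x) *
      (2 ^ (oneMax y - oneMax x) * oneMaxPotential n m x) :=
  mul_le_mul_of_nonneg_left
    (by linarith [oneMaxPotential_le_two_pow_mul (m := m) x y, oneMaxPotential_nonneg (m := m) x])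
    (mul_nonneg (hmut.nonneg x y) (pfix_nonneg hβ hN))

lemma sum_improving_driftTerm_le (hmut : IsOneMaxMutation n mutK) (hβ : 0 < β) (hN : 0 < N)
    (hNβ : 1 ≤ N * β) (hk : 3 * (n - oneMax x) ≤ n) :
    ∑ y ∈ univ.filter (fun y => oneMax x < oneMax y), driftTerm β N mutK m x y
      ≤ 16 * Real.exp 1 * β * (n - oneMax x : ℕ) / n * oneMaxPotential n m x := by
  set P := oneMaxPotential n m x
  have hP := oneMaxPotential_nonneg (m := m) x
  calc _ ≤ ∑ y ∈ univ.filter (fun y => oneMax x < oneMax y),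
        4 * β * P * (mutK x y * 4 ^ (oneMax y - oneMax x)) := by
        refine sum_le_sum fun y hy => (driftTerm_le x hmut hβ hN y).trans ?_
        set d := oneMax y - oneMax x
        have hlt : oneMax x < oneMax y := (mem_filter.mp hy).2
        have hd : (oneMax y : ℝ) - oneMax x = d := by rw [Nat.cast_sub hlt.le]
        have hd1 : (1 : ℝ) ≤ d := by exact_mod_cast (by omega : 1 ≤ d)
        have hd2 : (d : ℝ) ≤ 2 ^ d := by exact_mod_cast Nat.lt_two_pow_self.le
        have hpfix : pfix β N d ≤ 4 * β * 2 ^ d :=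
          (pfix_le_four_mul hβ hNβ hd1).trans (by gcongr)
        rw [hd]
        calc mutK x y * pfix β N d * (2 ^ d * P) ≤ mutK x y * (4 * β * 2 ^ d) * (2 ^ d * P) :=
              mul_le_mul_of_nonneg_right (mul_le_mul_of_nonneg_left hpfix (hmut.nonneg x y))
                (by positivity)
          _ = 4 * β * P * (mutK x y * 4 ^ d) := by
              rw [show (4 : ℝ) ^ d = 2 ^ d * 2 ^ d by rw [← mul_pow]; norm_num]
              ring
    _ = 4 * β * P * ∑ y ∈ univ.filter (fun y => oneMax x < oneMax y),
          mutK x y * 4 ^ (oneMax y - oneMax x) := by rw [mul_sum]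
    _ ≤ 4 * β * P * (4 * Real.exp 1 * (n - oneMax x : ℕ) / n) := by
        refine mul_le_mul_of_nonneg_left (hmut.sum_improving_mul_pow_le_exp (by norm_num) x ?_)
          (by positivity)
        norm_num
        exact_mod_cast hk
    _ = 16 * Real.exp 1 * β * (n - oneMax x : ℕ) / n * P := by ring

lemma sum_improving_driftTerm_le_two_mul_exp_one (hmut : IsOneMaxMutation n mutK) (hβ : 0 < β)
    (hN : 1 ≤ N) :
    ∑ y ∈ univ.filter (fun y => oneMax x < oneMax y), driftTerm β N mutK m x y
      ≤ 2 * Real.exp 1 * oneMaxPotential n m x := by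
  set P := oneMaxPotential n m x
  have hP := oneMaxPotential_nonneg (m := m) x
  have hk : ((n - oneMax x : ℕ) : ℝ) ≤ n := by exact_mod_cast Nat.sub_le n (oneMax x)
  calc _ ≤ ∑ y ∈ univ.filter (fun y => oneMax x < oneMax y),
        P * (mutK x y * 2 ^ (oneMax y - oneMax x)) := by
        refine sum_le_sum fun y _ => (driftTerm_le x hmut hβ (by linarith) y).trans ?_
        have := mul_le_mul_of_nonneg_right
          (mul_le_mul_of_nonneg_left (pfix_le_one (Δ := (oneMax y : ℝ) - oneMax x) hβ hN)
            (hmut.nonneg x y))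
          (by positivity : (0 : ℝ) ≤ 2 ^ (oneMax y - oneMax x) * P)
        linarith
    _ = P * ∑ y ∈ univ.filter (fun y => oneMax x < oneMax y),
          mutK x y * 2 ^ (oneMax y - oneMax x) := by rw [mul_sum]
    _ ≤ P * (2 * Real.exp 1 * (n - oneMax x : ℕ) / n) :=
        mul_le_mul_of_nonneg_left
          (hmut.sum_improving_mul_pow_le_exp le_rfl x (by norm_num)) hP
    _ ≤ P * (2 * Real.exp 1) := by
        refine mul_le_mul_of_nonneg_left ?_ hP
        rw [mul_div_assoc]
        exact mul_le_of_le_one_right (by positivity) (div_le_one_of_le₀ hk n.cast_nonneg)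
    _ = 2 * Real.exp 1 * P := by ring

lemma driftTerm_bitFlip_le (hmut : IsOneMaxMutation n mutK) (hβ : 0 < β) (hN : 0 < N)
    {i : Fin n} (hi : x i = true) (hk : n - oneMax x < m) :
    driftTerm β N mutK m x (bitFlip x i)
      ≤ -(pfix β N (-1) * oneMaxPotential n m x / (2 * Real.exp 1 * n)) := by
  set P := oneMaxPotential n m x
  set q := pfix β N (-1)
  have hcast : (oneMax (bitFlip x i) : ℝ) - oneMax x = -1 := by
    rw [← oneMax_bitFlip_of_true x hi]
    push_cast
    ring
  have hqP : 0 ≤ q * P := mul_nonneg (pfix_nonneg hβ hN) (oneMaxPotential_nonneg x)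
  rw [driftTerm, hcast, oneMaxPotential_bitFlip_of_true x hi hk]
  calc mutK x (bitFlip x i) * q * (2⁻¹ * P - P) = -(mutK x (bitFlip x i) * (q * P / 2)) := by ring
    _ ≤ -(1 / (Real.exp 1 * n) * (q * P / 2)) :=
        neg_le_neg (mul_le_mul_of_nonneg_right (hmut.one_div_exp_one_mul_le_bitFlip x i)
          (by positivity))
    _ = -(q * P / (2 * Real.exp 1 * n)) := by ring

/-- Near the optimum, each of the `oneMax x` one-bits is flipped with probability at least
`1/(e n)`, accepted with probability `pfix β N (-1)`, and halves the potential. -/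
lemma sum_worsening_driftTerm_le (hmut : IsOneMaxMutation n mutK) (hβ : 0 < β) (hN : 0 < N)
    (hk : n - oneMax x < m) :
    ∑ y ∈ univ.filter (fun y => ¬ oneMax x < oneMax y), driftTerm β N mutK m x y
      ≤ -(oneMax x * pfix β N (-1) / (2 * Real.exp 1 * n) * oneMaxPotential n m x) := by
  set ones := univ.filter fun i => x i = true
  have hsub : ones.image (bitFlip x) ⊆ univ.filter (fun y => ¬ oneMax x < oneMax y) := by
    intro y hy
    obtain ⟨i, hi, rfl⟩ := mem_image.mp hy
    have := oneMax_bitFlip_of_true x (mem_filter.mp hi).2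
    simp only [mem_filter, mem_univ, true_and]
    omega
  calc _ ≤ ∑ y ∈ ones.image (bitFlip x), driftTerm β N mutK m x y := by
        rw [← sum_sdiff hsub]
        refine add_le_of_nonpos_left (sum_nonpos fun y hy => ?_)
        exact driftTerm_nonpos x hmut hβ hN (not_lt.mp (mem_filter.mp (mem_sdiff.mp hy).1).2)
    _ = ∑ i ∈ ones, driftTerm β N mutK m x (bitFlip x i) :=
        sum_image fun i _ j _ h => bitFlip_injective x h
    _ ≤ ∑ _i ∈ ones, -(pfix β N (-1) * oneMaxPotential n m x / (2 * Real.exp 1 * n)) :=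
        sum_le_sum fun i hi => driftTerm_bitFlip_le x hmut hβ hN (mem_filter.mp hi).2 hk
    _ = _ := by
        rw [sum_const, nsmul_eq_mul, show #ones = oneMax x from rfl]
        ring

/-- `hq` makes the loss `oneMax x · p_fix(-1)/(2en)` of worsening steps near the optimum
outweigh the gain `16eβm/n` of improvements (relative to the current potential). -/
lemma sum_driftTerm_nonpos_of_near (hmut : IsOneMaxMutation n mutK) (hβ : 0 < β) (hN : 0 < N)
    (hNβ : 1 ≤ N * β) (hm : 3 * m ≤ n) (hq : 64 * Real.exp 1 ^ 2 * β * m ≤ n * pfix β N (-1))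
    (hk : n - oneMax x < m) : ∑ y, driftTerm β N mutK m x y ≤ 0 := by
  rw [← sum_filter_add_sum_filter_not univ fun y => oneMax x < oneMax y]
  have hup := sum_improving_driftTerm_le x hmut hβ hN hNβ (m := m) (by omega)
  have hdown := sum_worsening_driftTerm_le x hmut hβ hN hk
  have hP := oneMaxPotential_nonneg (m := m) x
  have hn : (0 : ℝ) < n := by exact_mod_cast (by omega : 0 < n)
  have hkm : ((n - oneMax x : ℕ) : ℝ) ≤ m := by exact_mod_cast hk.le
  have hhalf : (n : ℝ) ≤ 2 * oneMax x := by exact_mod_cast (by omega : n ≤ 2 * oneMax x)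
  have hq0 : 0 ≤ pfix β N (-1) := pfix_nonneg hβ hN
  have hbal : 32 * Real.exp 1 ^ 2 * β * (n - oneMax x : ℕ) ≤ oneMax x * pfix β N (-1) := by
    nlinarith [mul_le_mul_of_nonneg_left hkm (by positivity : (0 : ℝ) ≤ 32 * Real.exp 1 ^ 2 * β),
      mul_le_mul_of_nonneg_right hhalf hq0]
  have hrate : 16 * Real.exp 1 * β * (n - oneMax x : ℕ) / n
      ≤ oneMax x * pfix β N (-1) / (2 * Real.exp 1 * n) := by
    rw [div_le_div_iff₀ hn (by positivity)]
    nlinarith [mul_le_mul_of_nonneg_right hbal hn.le]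
  nlinarith [mul_le_mul_of_nonneg_right hrate hP]

lemma sum_driftTerm_le_of_far (hmut : IsOneMaxMutation n mutK) (hβ : 0 < β) (hN : 1 ≤ N)
    (hk : m ≤ n - oneMax x) : ∑ y, driftTerm β N mutK m x y ≤ 6 * 2⁻¹ ^ m := by
  rw [← sum_filter_add_sum_filter_not univ fun y => oneMax x < oneMax y]
  have hup := sum_improving_driftTerm_le_two_mul_exp_one x hmut hβ hN (m := m)
  have hdown : ∑ y ∈ univ.filter (fun y => ¬ oneMax x < oneMax y), driftTerm β N mutK m x y ≤ 0 :=
    sum_nonpos fun y hy => driftTerm_nonpos x hmut hβ (by linarith) (not_lt.mp (mem_filter.mp hy).2)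
  rw [oneMaxPotential_of_le x hk] at hup
  nlinarith [mul_le_mul_of_nonneg_right (by linarith [Real.exp_one_lt_d9] : Real.exp 1 ≤ 3)
    (pow_nonneg (by norm_num : (0 : ℝ) ≤ 2⁻¹) m)]

theorem sum_sswmKernel_mul_oneMaxPotential_le (hmut : IsOneMaxMutation n mutK) (hβ : 0 < β)
    (hN : 1 ≤ N) (hNβ : 1 ≤ N * β) (hm : 3 * m ≤ n)
    (hq : 64 * Real.exp 1 ^ 2 * β * m ≤ n * pfix β N (-1)) :
    ∑ y, sswmKernel β N mutK (fun z => (oneMax z : ℝ)) x y * oneMaxPotential n m y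
      ≤ oneMaxPotential n m x + 6 * 2⁻¹ ^ m := by
  rw [sum_sswmKernel_mul _ _ x (hmut.sum_eq_one x)]
  change oneMaxPotential n m x + ∑ y, driftTerm β N mutK m x y ≤ _
  rcases lt_or_ge (n - oneMax x) m with hnear | hfar
  · linarith [sum_driftTerm_nonpos_of_near x hmut hβ (by linarith) hNβ hm hq hnear,
      pow_nonneg (by norm_num : (0 : ℝ) ≤ 2⁻¹) m]
  · linarith [sum_driftTerm_le_of_far x hmut hβ hN hfar]

end Drift

theorem sswm_oneMax_hitProb_le {n m : ℕ} {β N : ℝ} {mutK : (Fin n → Bool) → (Fin n → Bool) → ℝ}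
    (hmut : IsOneMaxMutation n mutK) (hβ : 0 < β) (hN : 1 ≤ N) (hNβ : 1 ≤ N * β)
    (hm : 3 * m ≤ n) (hq : 64 * Real.exp 1 ^ 2 * β * m ≤ n * pfix β N (-1)) (t : ℕ) :
    hitProb (fun x => oneMax x = n) (sswmKernel β N mutK fun x => (oneMax x : ℝ))
        (uniformInit n) t ≤ 2⁻¹ ^ m + (3 / 4) ^ n + t * (6 * 2⁻¹ ^ m) := by
  calc _ ≤ ∑ x, uniformInit n x * oneMaxPotential n m x + t * (6 * 2⁻¹ ^ m) :=
        hitProb_le_of_drift (fun x y => sswmKernel_nonneg _ x hmut.nonneg hβ hN y)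
          (fun x => sum_sswmKernel _ x (hmut.sum_eq_one x)) (fun _ => by simp [uniformInit])
          sum_uniformInit oneMaxPotential_nonneg oneMaxPotential_of_oneMax_eq (by positivity)
          (fun x _ => sum_sswmKernel_mul_oneMaxPotential_le x hmut hβ hN hNβ hm hq) t
    _ ≤ 2⁻¹ ^ m + (3 / 4) ^ n + t * (6 * 2⁻¹ ^ m) := by
        linarith [sum_uniformInit_mul_oneMaxPotential_le (n := n) (m := m)]

lemma three_div_four_pow_le {m n : ℕ} (h : 4 * m ≤ n) : (3 / 4 : ℝ) ^ n ≤ 2⁻¹ ^ m :=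
  calc (3 / 4 : ℝ) ^ n ≤ (3 / 4) ^ (4 * m) := pow_le_pow_of_le_one (by norm_num) (by norm_num) h
    _ = ((3 / 4) ^ 4) ^ m := pow_mul _ _ _
    _ ≤ 2⁻¹ ^ m := pow_le_pow_left₀ (by norm_num) (by norm_num) m

lemma two_add_mul_mul_inv_two_pow_le {A : ℝ} (hA : 3 ≤ A) {m t : ℕ} (hm : 3 * A ≤ m)
    (ht : (t : ℝ) < 2 ^ A) : (2 + 6 * t) * 2⁻¹ ^ m ≤ (2 : ℝ) ^ (-A) := by
  have h2A : 1 ≤ (2 : ℝ) ^ A := Real.one_le_rpow (by norm_num) (by linarith)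
  calc (2 + 6 * t) * 2⁻¹ ^ m ≤ (2 : ℝ) ^ (3 : ℝ) * 2 ^ A * 2 ^ (-(m : ℝ)) := by
        rw [Real.rpow_neg (by norm_num), Real.rpow_natCast, inv_pow]
        gcongr
        norm_num
        linarith
    _ = (2 : ℝ) ^ (3 + A - m) := by
        rw [← Real.rpow_add (by norm_num), ← Real.rpow_add (by norm_num), sub_eq_add_neg]
    _ ≤ 2 ^ (-A) := Real.rpow_le_rpow_of_exponent_le (by norm_num) (by linarith)

lemma one_le_and_le_rpow_of_ceil_le {ε : ℝ} (hε : 0 < ε) {a : ℝ} (ha : 1 ≤ a) {n : ℕ}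
    (hn : ⌈a ^ (2 / ε)⌉₊ ≤ n) : 1 ≤ (n : ℝ) ∧ a ≤ (n : ℝ) ^ (ε / 2) := by
  have hn' : a ^ (2 / ε) ≤ n := Nat.ceil_le.mp hn
  refine ⟨(Real.one_le_rpow ha (by positivity)).trans hn', ?_⟩
  calc a = (a ^ (2 / ε)) ^ (ε / 2) := by
        rw [← Real.rpow_mul (by linarith), show 2 / ε * (ε / 2) = 1 by field_simp, Real.rpow_one]
    _ ≤ (n : ℝ) ^ (ε / 2) := Real.rpow_le_rpow (by positivity) hn' (by positivity)

lemma sixty_four_mul_exp_one_sq_mul_le {A β : ℝ} (hA : 1000 ≤ A) (hβ : 0 ≤ β) {m : ℕ}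
    (hm : (m : ℝ) ≤ 4 * A) : 64 * Real.exp 1 ^ 2 * β * m ≤ 2 * β * (A * A) := by
  have he : Real.exp 1 ^ 2 ≤ 7.39 := by nlinarith [Real.exp_one_lt_d9, Real.exp_pos 1]
  have h : 64 * Real.exp 1 ^ 2 * m ≤ 2 * (A * A) := by
    nlinarith [mul_le_mul_of_nonneg_right he (Nat.cast_nonneg m : (0 : ℝ) ≤ m)]
  nlinarith [mul_le_mul_of_nonneg_left h hβ]

theorem sswm_onemax_lower_bound (ε : ℝ) (hε0 : 0 < ε) (hε1 : ε < 1) :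
    ∃ c : ℝ, 0 < c ∧ ∃ c' : ℝ, 0 < c' ∧ ∃ n₀ : ℕ, ∀ n : ℕ, n₀ ≤ n →
      ∀ β : ℝ, 0 < β →
      ∀ N : ℕ, 0 < N → 1 ≤ (N : ℝ) * β →
        (N : ℝ) * β ≤ (1 - ε) / 2 * Real.log n →
      ∀ mutK : (Fin n → Bool) → (Fin n → Bool) → ℝ,
        (mutK = globalMut n ∨ mutK = localMut n) →
      -- `P(T < 2^{c·n^{ε/2}}) ≤ 2^{−c'·n^{ε/2}}`: the probability of having hit the
      -- optimum within any number `t` of steps with `t < 2^{c·n^{ε/2}}` is at most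
      -- `2^{−c'·n^{ε/2}}`.
      ∀ t : ℕ, (t : ℝ) < (2 : ℝ) ^ (c * (n : ℝ) ^ (ε / 2)) →
        hitProb (fun x => oneMax x = n)
            (sswmKernel β N mutK (fun x => (oneMax x : ℝ))) (uniformInit n) t ≤
          (2 : ℝ) ^ (-(c' * (n : ℝ) ^ (ε / 2))) := by
  refine ⟨1, one_pos, 1, one_pos, ⌈(1000 : ℝ) ^ (2 / ε)⌉₊, ?_⟩
  intro n hn β hβ N hN hNβ hNβ_log mutK hmutK t ht
  rw [one_mul] at ht ⊢
  obtain ⟨hn1, hA⟩ := one_le_and_le_rpow_of_ceil_le hε0 (by norm_num) hn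
  set A := (n : ℝ) ^ (ε / 2)
  have hAA : A * A = (n : ℝ) ^ ε := by rw [← Real.rpow_add (by linarith)]; ring_nf
  have hAn : A * A ≤ n := by simpa [hAA] using Real.rpow_le_rpow_of_exponent_le hn1 hε1.le
  set m := ⌈3 * A⌉₊
  have hm3 : 3 * A ≤ m := Nat.le_ceil _
  have hm4 : (m : ℝ) ≤ 4 * A := by linarith [Nat.ceil_lt_add_one (by positivity : 0 ≤ 3 * A)]
  have hmn : 4 * m ≤ n := by exact_mod_cast (show (4 * m : ℝ) ≤ n by nlinarith)
  have hmut : IsOneMaxMutation n mutK := by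
    rcases hmutK with rfl | rfl
    exacts [isOneMaxMutation_globalMut (by exact_mod_cast hn1),
      isOneMaxMutation_localMut (by exact_mod_cast hn1)]
  have hq : 64 * Real.exp 1 ^ 2 * β * m ≤ n * pfix β N (-1) :=
    (sixty_four_mul_exp_one_sq_mul_le hA hβ.le hm4).trans (hAA ▸
      two_mul_mul_rpow_le_mul_pfix_neg_one (by linarith) hβ (by exact_mod_cast hN) hNβ_log)
  calc hitProb (fun x => oneMax x = n) (sswmKernel β N mutK fun x => (oneMax x : ℝ))
        (uniformInit n) t ≤ 2⁻¹ ^ m + (3 / 4) ^ n + t * (6 * 2⁻¹ ^ m) :=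
        sswm_oneMax_hitProb_le hmut hβ (by exact_mod_cast hN) hNβ (by omega) hq t
    _ ≤ (2 + 6 * t) * 2⁻¹ ^ m := by linarith [three_div_four_pow_le hmn]
    _ ≤ 2 ^ (-A) := two_add_mul_mul_inv_two_pow_le (by linarith) hm3 ht
end

section
/- There exist constants c₁, c₂ > 0 and n₀ such that for all n ≥ n₀ and all integers d with 2 ≤ d ≤ n/2, the expected optimisation time T of the (1+1) EA, initialised uniformly at random in {0,1}^n, on Cliff_d satisfies c₁·n^d ≤ E[T] ≤ c₂·n^d. -/
open scoped ENNReal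

open Classical in
/-- One step of the (1+1) EA with fitness `f`: create `y` from `x` by standard bit
mutation and accept it if and only if `f(y) ≥ f(x)`. -/
noncomputable def eaKernel {n : ℕ} (f : (Fin n → Bool) → ℝ) (x y : Fin n → Bool) : ℝ :=
  globalMut n x y * (if f x ≤ f y then 1 else 0) +
    if y = x then ∑ z, globalMut n x z * (if f z < f x then 1 else 0) else 0

/-- `Cliff_d(x) = |x|₁` if `|x|₁ ≤ n − d`, and `|x|₁ − d + 1/2` otherwise. -/
noncomputable def cliff (n d : ℕ) (x : Fin n → Bool) : ℝ :=
  if oneMax x ≤ n - d then (oneMax x : ℝ) else (oneMax x : ℝ) - d + 1 / 2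


/-!
Both bounds come from additive drift on potentials of the number `k` of ones.

Upper bound: a one-bit improvement has probability at least `1/(3n)`, and the jump to the
optimum from the cliff edge `k = n - d` (or from `k = n - 1`) has probability at least
`n^{-d}/3`. A potential charging `3n` per one-bit step and `3n^d` for the final jump is at
most `6n^d`, and it decreases by at least `1` per step in expectation.

Lower bound: from `k ≤ n - d` with `z = n - k` zeros, an accepted jump beyond the cliff
has to flip at least `m = max(d, z - d + 1)` of the zeros. So its probability is at most
`C(z, m) n^{-m}`, and it gains at most `n^d`. Charging each one-bit step below the edge
`3n^{d+1} C(z, m) n^{-m}` cancels this gain, so the potential `n^d` minus the charges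
still ahead has drift at most `1`. The charges add up to at most `n^d/2` once `n ≥ 192`,
and half of the initial strings start below the edge, so `E[T] ≥ n^d/4`.
-/

open Finset

namespace EACliff

def IsStochastic {α : Type*} [Fintype α] (K : α → α → ℝ) : Prop :=
  (∀ x y, 0 ≤ K x y) ∧ ∀ x, ∑ y, K x y = 1

def IsDistribution {α : Type*} [Fintype α] (μ : α → ℝ) : Prop :=
  (∀ x, 0 ≤ μ x) ∧ ∑ x, μ x = 1

lemma IsDistribution.sum_mul_le {α : Type*} [Fintype α] {μ : α → ℝ}
    (hμ : IsDistribution μ) {G : α → ℝ} {C : ℝ} (hG : ∀ x, G x ≤ C) :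
    ∑ x, μ x * G x ≤ C :=
  calc ∑ x, μ x * G x ≤ ∑ x, μ x * C :=
        sum_le_sum fun x _ => mul_le_mul_of_nonneg_left (hG x) (hμ.1 x)
    _ = C := by rw [← sum_mul, hμ.2, one_mul]

variable {n : ℕ}

section Chain

variable {opt : (Fin n → Bool) → Prop} {K : (Fin n → Bool) → (Fin n → Bool) → ℝ}
  {μ0 : (Fin n → Bool) → ℝ}

open Classical in
lemma IsStochastic.absorb (hK : IsStochastic K) : IsStochastic (absorb opt K) := by
  refine ⟨fun x y => ?_, fun x => ?_⟩ <;> unfold _root_.absorb <;> split_ifs <;>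
    simp [hK.1, hK.2]

lemma IsDistribution.walk (hK : IsStochastic K) (hμ0 : IsDistribution μ0) (t : ℕ) :
    IsDistribution (walk K μ0 t) := by
  induction t with
  | zero => exact hμ0
  | succ t ih =>
    refine ⟨fun y => sum_nonneg fun x _ => mul_nonneg (ih.1 x) (hK.1 x y), ?_⟩
    simp only [_root_.walk]
    rw [sum_comm]
    simp [← mul_sum, hK.2, ih.2]

lemma sum_walk_succ_mul (G : (Fin n → Bool) → ℝ) (t : ℕ) :
    ∑ y, walk K μ0 (t + 1) y * G y = ∑ x, walk K μ0 t x * ∑ y, K x y * G y := by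
  simp only [walk, sum_mul, mul_sum, mul_assoc]
  exact sum_comm

variable (hK : IsStochastic K) (hμ0 : IsDistribution μ0)
include hK hμ0

lemma walk_absorb_nonneg (t : ℕ) (x : Fin n → Bool) : 0 ≤ walk (absorb opt K) μ0 t x :=
  ((hμ0.walk hK.absorb) t).1 x

open Classical in
lemma one_sub_hitProb (t : ℕ) :
    1 - hitProb opt K μ0 t = ∑ x, if opt x then 0 else walk (absorb opt K) μ0 t x := by
  rw [hitProb, ← ((hμ0.walk hK.absorb) t).2, ← sum_sub_distrib]
  exact sum_congr rfl fun x _ => by split_ifs <;> ring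

lemma one_sub_hitProb_nonneg (t : ℕ) : 0 ≤ 1 - hitProb opt K μ0 t := by
  rw [one_sub_hitProb hK hμ0]
  exact sum_nonneg fun x _ => by split_ifs; exacts [le_rfl, walk_absorb_nonneg hK hμ0 t x]

lemma mul_sum_range_add_potential_le (G : (Fin n → Bool) → ℝ) (δ : ℝ)
    (hdrift : ∀ x, ¬ opt x → ∑ y, K x y * G y ≤ G x - δ) (T : ℕ) :
    δ * ∑ t ∈ range T, (1 - hitProb opt K μ0 t) + ∑ x, walk (absorb opt K) μ0 T x * G x
      ≤ ∑ x, μ0 x * G x := by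
  classical
  induction T with
  | zero => simp [walk]
  | succ T ih =>
    have hstep : ∀ x, ∑ y, absorb opt K x y * G y ≤ G x - δ * (if opt x then 0 else 1) := by
      intro x
      by_cases hx : opt x <;> simp [absorb, hx, hdrift]
    have : ∑ x, walk (absorb opt K) μ0 (T + 1) x * G x
        ≤ ∑ x, walk (absorb opt K) μ0 T x * G x - δ * (1 - hitProb opt K μ0 T) := by
      rw [sum_walk_succ_mul, one_sub_hitProb hK hμ0, mul_sum, ← sum_sub_distrib]
      refine sum_le_sum fun x _ => ?_
      calc _ ≤ walk (absorb opt K) μ0 T x * (G x - δ * (if opt x then 0 else 1)) :=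
            mul_le_mul_of_nonneg_left (hstep x) (walk_absorb_nonneg hK hμ0 T x)
        _ = _ := by split_ifs <;> ring
    rw [sum_range_succ]
    linarith

theorem expectedTime_le_of_drift (G : (Fin n → Bool) → ℝ) (hG : ∀ x, 0 ≤ G x)
    (hdrift : ∀ x, ¬ opt x → ∑ y, K x y * G y ≤ G x - 1) :
    expectedTime opt K μ0 ≤ ENNReal.ofReal (∑ x, μ0 x * G x) := by
  refine ENNReal.tsum_le_of_sum_range_le fun T => ?_
  rw [← ENNReal.ofReal_sum_of_nonneg fun t _ => one_sub_hitProb_nonneg hK hμ0 t]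
  refine ENNReal.ofReal_le_ofReal ?_
  have hT := mul_sum_range_add_potential_le hK hμ0 G 1 hdrift T
  have : 0 ≤ ∑ x, walk (absorb opt K) μ0 T x * G x :=
    sum_nonneg fun x _ => mul_nonneg (walk_absorb_nonneg hK hμ0 T x) (hG x)
  linarith

/-- The bound `g ≤ M` makes the potential left at time `T` at most `M · P(τ > T)`, which
vanishes as `T → ∞` whenever the expected time is finite. -/
theorem le_expectedTime_of_drift (g : (Fin n → Bool) → ℝ) (M : ℝ) (hgM : ∀ x, g x ≤ M)
    (hg_opt : ∀ x, opt x → g x ≤ 0)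
    (hdrift : ∀ x, ¬ opt x → g x - 1 ≤ ∑ y, K x y * g y) :
    ENNReal.ofReal (∑ x, μ0 x * g x) ≤ expectedTime opt K μ0 := by
  by_cases htop : expectedTime opt K μ0 = ⊤
  · exact htop ▸ le_top
  have hsum : Summable fun t => 1 - hitProb opt K μ0 t := by
    simpa [ENNReal.toReal_ofReal (one_sub_hitProb_nonneg hK hμ0 _)]
      using ENNReal.summable_toReal htop
  have hrest : ∀ T,
      ∑ x, walk (absorb opt K) μ0 T x * g x ≤ M * (1 - hitProb opt K μ0 T) := by
    intro T
    rw [one_sub_hitProb hK hμ0, mul_sum]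
    refine sum_le_sum fun x _ => ?_
    have hw := walk_absorb_nonneg (opt := opt) hK hμ0 T x
    split_ifs with hx
    · simpa using mul_nonpos_of_nonneg_of_nonpos hw (hg_opt x hx)
    · simpa [mul_comm] using mul_le_mul_of_nonneg_left (hgM x) hw
  have hbound : ∀ T, ∑ x, μ0 x * g x
      ≤ ∑' t, (1 - hitProb opt K μ0 t) + M * (1 - hitProb opt K μ0 T) := by
    intro T
    have hT := mul_sum_range_add_potential_le hK hμ0 (-g) (-1)
      (fun x hx => by simp only [Pi.neg_apply, mul_neg, sum_neg_distrib]; linarith [hdrift x hx]) T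
    simp only [Pi.neg_apply, mul_neg, sum_neg_distrib, neg_one_mul] at hT
    linarith [hrest T, hsum.sum_le_tsum (range T) fun t _ => one_sub_hitProb_nonneg hK hμ0 t]
  have hlim : Filter.Tendsto
      (fun T => ∑' t, (1 - hitProb opt K μ0 t) + M * (1 - hitProb opt K μ0 T)) Filter.atTop
      (nhds (∑' t, (1 - hitProb opt K μ0 t))) := by
    simpa using tendsto_const_nhds.add (hsum.tendsto_atTop_zero.const_mul M)
  rw [expectedTime, ← ENNReal.ofReal_tsum_of_nonneg (one_sub_hitProb_nonneg hK hμ0) hsum]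
  exact ENNReal.ofReal_le_ofReal (ge_of_tendsto' hlim hbound)

end Chain

section Mutation

lemma one_sub_inv_nonneg (n : ℕ) : 0 ≤ 1 - 1 / (n : ℝ) :=
  sub_nonneg.2 (one_div (n : ℝ) ▸ Nat.cast_inv_le_one n)

lemma one_sub_inv_le_one (n : ℕ) : 1 - 1 / (n : ℝ) ≤ 1 := by
  have : (0 : ℝ) ≤ 1 / n := by positivity
  linarith

lemma globalMut_nonneg (x y : Fin n → Bool) : 0 ≤ globalMut n x y :=
  mul_nonneg (by positivity) (pow_nonneg (one_sub_inv_nonneg n) _)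

lemma globalMut_eq_prod (x y : Fin n → Bool) :
    globalMut n x y = ∏ i, if x i = y i then 1 - 1 / (n : ℝ) else 1 / n := by
  have hcard : #{i | x i = y i} = n - hamming x y := by
    have h := card_filter_add_card_filter_not (s := univ) (fun i => x i = y i)
    rw [card_univ, Fintype.card_fin] at h
    simp only [hamming, ne_eq]
    omega
  rw [prod_ite, prod_const, prod_const, hcard, globalMut, hamming, mul_comm]

lemma sum_globalMut_filter_forall_ne (x : Fin n → Bool) (S : Finset (Fin n)) :
    ∑ y with ∀ i ∈ S, y i ≠ x i, globalMut n x y = (1 / n : ℝ) ^ #S := by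
  set p : Fin n → Bool → ℝ := fun i b => if x i = b then 1 - 1 / (n : ℝ) else 1 / n
  have hy : ∀ y : Fin n → Bool, (if ∀ i ∈ S, y i ≠ x i then globalMut n x y else 0)
      = ∏ i, if ¬ (i ∈ S ∧ y i = x i) then p i (y i) else 0 := by
    intro y
    rw [Fintype.prod_ite_zero, globalMut_eq_prod]
    simp only [not_and]
    rfl
  rw [sum_filter, Fintype.sum_congr _ _ hy,
    ← Fintype.prod_sum (fun i b => if ¬ (i ∈ S ∧ b = x i) then p i b else 0),
    ← prod_const (s := S) (1 / (n : ℝ)),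
    ← Fintype.prod_ite_mem S (fun _ => 1 / (n : ℝ))]
  refine prod_congr rfl fun i _ => ?_
  by_cases hi : i ∈ S <;> cases hx : x i <;> simp [p, hi, hx]

lemma sum_globalMut (x : Fin n → Bool) : ∑ y, globalMut n x y = 1 := by
  simpa using sum_globalMut_filter_forall_ne x ∅

/-- Union bound over the `m`-subsets of `Z` that a mutation in `E` has to flip. -/
lemma sum_globalMut_le_choose_mul (x : Fin n → Bool) (E : Finset (Fin n → Bool))
    (Z : Finset (Fin n)) (m : ℕ) (hE : ∀ y ∈ E, m ≤ #{i ∈ Z | y i ≠ x i}) :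
    ∑ y ∈ E, globalMut n x y ≤ (#Z).choose m * (1 / n : ℝ) ^ m := by
  set F : Finset (Fin n) → (Fin n → Bool) → ℝ :=
    fun S y => if ∀ i ∈ S, y i ≠ x i then globalMut n x y else 0
  have hF : ∀ S y, 0 ≤ F S y := fun S y => by
    simp only [F]; split_ifs <;> simp [globalMut_nonneg]
  have hcover : ∀ y ∈ E, globalMut n x y ≤ ∑ S ∈ Z.powersetCard m, F S y := by
    intro y hy
    obtain ⟨S, hSZ, hS⟩ := exists_subset_card_eq (hE y hy)
    have hSmem : S ∈ Z.powersetCard m :=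
      mem_powersetCard.2 ⟨hSZ.trans (filter_subset _ _), hS⟩
    have hflip : ∀ i ∈ S, y i ≠ x i := fun i hi => (mem_filter.1 (hSZ hi)).2
    calc globalMut n x y = F S y := (if_pos hflip).symm
      _ ≤ _ := single_le_sum (fun S _ => hF S y) hSmem
  calc ∑ y ∈ E, globalMut n x y ≤ ∑ y, ∑ S ∈ Z.powersetCard m, F S y :=
        (sum_le_sum hcover).trans
          (sum_le_sum_of_subset_of_nonneg (subset_univ E) fun y _ _ => sum_nonneg fun S _ => hF S y)
    _ = ∑ S ∈ Z.powersetCard m, (1 / n : ℝ) ^ m := by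
        rw [sum_comm]
        refine sum_congr rfl fun S hS => ?_
        rw [← (mem_powersetCard.1 hS).2, ← sum_globalMut_filter_forall_ne x S, sum_filter]
    _ = (#Z).choose m * (1 / n : ℝ) ^ m := by simp

lemma one_third_le_one_sub_inv_pow (n : ℕ) : (1 / 3 : ℝ) ≤ (1 - 1 / n) ^ (n - 1) := by
  rcases n with _ | m
  · norm_num
  rcases m.eq_zero_or_pos with rfl | hm
  · norm_num
  have hbase : 1 - 1 / ((m + 1 : ℕ) : ℝ) = (1 + (m : ℝ)⁻¹)⁻¹ := by
    have : (0 : ℝ) < m := by exact_mod_cast hm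
    push_cast
    field_simp
    ring
  rw [hbase, Nat.add_sub_cancel, inv_pow, one_div]
  exact inv_anti₀ (by positivity)
    (Real.one_add_inv_pow_le_exp.trans Real.exp_one_lt_three.le)

lemma globalMut_ge (x y : Fin n → Bool) (h : 1 ≤ hamming x y) :
    (1 / n : ℝ) ^ hamming x y / 3 ≤ globalMut n x y := by
  rw [globalMut, div_eq_mul_one_div _ 3]
  gcongr
  exact (one_third_le_one_sub_inv_pow n).trans
    (pow_le_pow_of_le_one (one_sub_inv_nonneg n) (one_sub_inv_le_one n) (by omega))

end Mutation

section EAKernel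

variable (f G : (Fin n → Bool) → ℝ)

noncomputable def eaDriftTerm (x y : Fin n → Bool) : ℝ :=
  if f x ≤ f y then globalMut n x y * (G x - G y) else 0

noncomputable def eaDrift (x : Fin n → Bool) : ℝ := ∑ y, eaDriftTerm f G x y

lemma sum_eaKernel_mul (x : Fin n → Bool) :
    ∑ y, eaKernel f x y * G y = G x - eaDrift f G x := by
  have hrej : ∑ z, globalMut n x z * (if f z < f x then 1 else 0)
      = 1 - ∑ z, globalMut n x z * (if f x ≤ f z then 1 else 0) := by
    have hsplit : ∑ z, globalMut n x z * (if f z < f x then 1 else 0)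
        + ∑ z, globalMut n x z * (if f x ≤ f z then 1 else 0) = ∑ z, globalMut n x z := by
      rw [← sum_add_distrib]
      refine sum_congr rfl fun z _ => ?_
      by_cases h : f x ≤ f z
      · simp [h, not_lt.2 h]
      · simp [h, lt_of_not_ge h]
    linarith [sum_globalMut x]
  have hterm : ∀ y, eaDriftTerm f G x y
      = globalMut n x y * (if f x ≤ f y then 1 else 0) * (G x - G y) := fun y => by
    unfold eaDriftTerm
    split_ifs <;> ring
  simp only [eaKernel, eaDrift, hterm, add_mul, sum_add_distrib, ite_mul, zero_mul, sum_ite_eq',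
    mem_univ, if_true, hrej, mul_sub, sum_sub_distrib, ← sum_mul]
  ring

lemma isStochastic_eaKernel : IsStochastic (eaKernel f) := by
  refine ⟨fun x y => ?_, fun x => by simpa [eaDrift, eaDriftTerm] using sum_eaKernel_mul f 1 x⟩
  have := globalMut_nonneg x y
  unfold eaKernel
  refine add_nonneg (by positivity) ?_
  split_ifs
  · exact sum_nonneg fun z _ => mul_nonneg (globalMut_nonneg x z) (by positivity)
  · exact le_rfl

variable {f G} {x y : Fin n → Bool}

lemma eaDriftTerm_of_le (h : f x ≤ f y) : eaDriftTerm f G x y = globalMut n x y * (G x - G y) :=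
  if_pos h

lemma eaDriftTerm_nonneg (h : f x ≤ f y → G y ≤ G x) : 0 ≤ eaDriftTerm f G x y := by
  unfold eaDriftTerm
  split_ifs with hacc
  · exact mul_nonneg (globalMut_nonneg x y) (sub_nonneg.2 (h hacc))
  · exact le_rfl

lemma eaDriftTerm_nonpos (h : f x ≤ f y → G x ≤ G y) : eaDriftTerm f G x y ≤ 0 := by
  unfold eaDriftTerm
  split_ifs with hacc
  · exact mul_nonpos_of_nonneg_of_nonpos (globalMut_nonneg x y) (sub_nonpos.2 (h hacc))
  · exact le_rfl

lemma le_eaDrift (hmono : ∀ y, f x ≤ f y → G y ≤ G x) (hy : f x ≤ f y) :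
    globalMut n x y * (G x - G y) ≤ eaDrift f G x := by
  rw [← eaDriftTerm_of_le hy]
  exact single_le_sum (fun z _ => eaDriftTerm_nonneg (hmono z)) (mem_univ y)

end EAKernel

section BitStrings

lemma oneMax_le (x : Fin n → Bool) : oneMax x ≤ n :=
  (card_filter_le _ _).trans_eq (card_fin n)

lemma card_filter_eq_false (x : Fin n → Bool) : #{i | x i = false} = n - oneMax x := by
  have h := card_filter_add_card_filter_not (s := univ) (fun i => x i = true)
  simp only [card_univ, Fintype.card_fin, Bool.not_eq_true] at h
  rw [oneMax]
  omega

lemma oneMax_const_true : oneMax (fun _ : Fin n => true) = n := by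
  simp [oneMax]

lemma hamming_const_true (x : Fin n → Bool) : hamming x (fun _ => true) = n - oneMax x := by
  simp [hamming, card_filter_eq_false]

lemma exists_eq_false {x : Fin n → Bool} (hx : oneMax x ≠ n) : ∃ i, x i = false := by
  by_contra! h
  exact hx (by simp [oneMax, h])

lemma oneMax_update_true {x : Fin n → Bool} {i : Fin n} (hi : x i = false) :
    oneMax (Function.update x i true) = oneMax x + 1 := by
  have : (univ.filter fun j => Function.update x i true j)
      = insert i (univ.filter fun j => x j) := by
    ext j
    by_cases hj : j = i <;> simp [hj, Function.update_apply]
  rw [oneMax, this, card_insert_of_notMem (by simp [hi]), oneMax]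

lemma hamming_update_true {x : Fin n → Bool} {i : Fin n} (hi : x i = false) :
    hamming x (Function.update x i true) = 1 := by
  have : (univ.filter fun j => x j ≠ Function.update x i true j) = {i} := by
    ext j
    by_cases hj : j = i <;> simp [hj, hi, Function.update_apply]
  rw [hamming, this, card_singleton]

lemma oneMax_le_add_card_flipped_zeros (x y : Fin n → Bool) :
    oneMax y ≤ oneMax x + #{i ∈ {i | x i = false} | y i ≠ x i} := by
  refine (card_le_card fun i hi => ?_).trans (card_union_le _ _)
  cases hx : x i <;> simp_all

lemma isDistribution_uniformInit : IsDistribution (uniformInit n) :=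
  ⟨fun _ => by unfold uniformInit; positivity, by simp [uniformInit]⟩

lemma two_pow_le_two_mul_card_oneMax_le_half :
    2 ^ n ≤ 2 * #{x : Fin n → Bool | 2 * oneMax x ≤ n} := by
  have hsplit :=
    card_filter_add_card_filter_not (s := univ) (fun x : Fin n → Bool => 2 * oneMax x ≤ n)
  have hcompl : #{x : Fin n → Bool | ¬ 2 * oneMax x ≤ n}
      ≤ #{x : Fin n → Bool | 2 * oneMax x ≤ n} := by
    refine card_le_card_of_injOn (fun x i => !x i) (fun x hx => ?_) (fun x _ y _ h => ?_)
    · have hc : oneMax (fun i => !x i) = n - oneMax x := by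
        rw [← card_filter_eq_false]
        simp [oneMax]
      simp only [coe_filter, mem_univ, true_and, Set.mem_ofPred_eq] at hx ⊢
      have := oneMax_le x
      omega
    · funext i
      simpa using congrFun h i
  simp only [card_univ, Fintype.card_fun, Fintype.card_bool, Fintype.card_fin] at hsplit
  omega

end BitStrings

section Cliff

variable {d : ℕ}

def cliffRank (n d k : ℕ) : ℕ := if k + d ≤ n then 2 * k else 2 * (k - d) + 1

lemma cliffRank_of_le {k : ℕ} (h : k + d ≤ n) : cliffRank n d k = 2 * k := if_pos h

lemma cliffRank_of_lt {k : ℕ} (h : n < k + d) : cliffRank n d k = 2 * (k - d) + 1 :=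
  if_neg (by omega)

lemma two_mul_cliff (hdn : 2 * d ≤ n) (x : Fin n → Bool) :
    2 * cliff n d x = cliffRank n d (oneMax x) := by
  unfold cliff cliffRank
  by_cases h : oneMax x + d ≤ n
  · rw [if_pos (by omega), if_pos h]
    push_cast
    ring
  · rw [if_neg (by omega), if_neg h]
    push_cast [show d ≤ oneMax x by omega]
    ring

lemma cliff_le_cliff_iff (hdn : 2 * d ≤ n) {x y : Fin n → Bool} :
    cliff n d x ≤ cliff n d y ↔ cliffRank n d (oneMax x) ≤ cliffRank n d (oneMax y) := by
  rw [← Nat.cast_le (α := ℝ), ← two_mul_cliff hdn, ← two_mul_cliff hdn]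
  constructor <;> intro h <;> linarith

end Cliff

section UpperPotential

variable {d k l : ℕ}

noncomputable def upperPotential (n d k : ℕ) : ℝ :=
  if k = n then 0
  else 3 * n ^ d + 3 * n * (((if k + d ≤ n then n - d else n - 1) - k : ℕ) : ℝ)

lemma upperPotential_nonneg : 0 ≤ upperPotential n d k := by
  unfold upperPotential
  split_ifs <;> positivity

lemma upperPotential_le (hd : 2 ≤ d) : upperPotential n d k ≤ 6 * n ^ d := by
  have hsq : (n : ℝ) * n ≤ n ^ d := by
    rcases n.eq_zero_or_pos with rfl | hn
    · simp [zero_pow (by omega : d ≠ 0)]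
    · rw [← sq]
      exact pow_le_pow_right₀ (by exact_mod_cast hn) hd
  have hstep : ((((if k + d ≤ n then n - d else n - 1) - k : ℕ)) : ℝ) ≤ n := by
    exact_mod_cast (Nat.sub_le _ _).trans (by split_ifs <;> omega)
  rw [upperPotential]
  by_cases hkn : k = n
  · rw [if_pos hkn]
    positivity
  · rw [if_neg hkn]
    nlinarith [mul_le_mul_of_nonneg_left hstep (by positivity : (0 : ℝ) ≤ 3 * n)]

lemma upperPotential_anti (hd : 1 ≤ d) (hdn : 2 * d ≤ n) (hl : l ≤ n)
    (hkl : cliffRank n d k ≤ cliffRank n d l) :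
    upperPotential n d l ≤ upperPotential n d k := by
  unfold cliffRank at hkl
  unfold upperPotential
  by_cases hln : l = n
  · rw [if_pos hln]
    split_ifs <;> positivity
  by_cases hkn : k = n
  · subst hkn
    split_ifs at hkl <;> omega
  have hstep : (if l + d ≤ n then n - d else n - 1) - l
      ≤ (if k + d ≤ n then n - d else n - 1) - k := by
    split_ifs at hkl ⊢ <;> omega
  rw [if_neg hln, if_neg hkn]
  gcongr 3 * n ^ d + 3 * n * ?_
  exact_mod_cast hstep

lemma upperPotential_succ_add_le (hd : 1 ≤ d) (hk : k < n) (hedge : k + d ≠ n) :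
    upperPotential n d (k + 1) + 3 * n ≤ upperPotential n d k := by
  unfold upperPotential
  rw [if_neg hk.ne]
  by_cases hlast : k + 1 = n
  · have hn : (n : ℝ) ≤ n ^ d := by
      rcases n.eq_zero_or_pos with rfl | hn
      · omega
      · exact le_self_pow₀ (by exact_mod_cast hn) (by omega)
    rw [if_pos hlast]
    have : 0 ≤ (((if k + d ≤ n then n - d else n - 1) - k : ℕ) : ℝ) := by positivity
    nlinarith
  · rw [if_neg hlast]
    have : ((if k + d ≤ n then n - d else n - 1) - k : ℕ)
        = ((if k + 1 + d ≤ n then n - d else n - 1) - (k + 1) : ℕ) + 1 := by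
      split_ifs <;> omega
    rw [this]
    push_cast
    linarith

lemma upperPotential_edge (hd : 1 ≤ d) (hdn : d ≤ n) :
    upperPotential n d (n - d) = 3 * n ^ d := by
  simp [upperPotential, show n - d ≠ n by omega, show n - d + d ≤ n by omega]

lemma upperPotential_self : upperPotential n d n = 0 := by
  simp [upperPotential]

lemma one_le_eaDrift_upperPotential (hd : 1 ≤ d) (hdn : 2 * d ≤ n) {x : Fin n → Bool}
    (hx : oneMax x ≠ n) :
    1 ≤ eaDrift (cliff n d) (fun y => upperPotential n d (oneMax y)) x := by
  have hn : (0 : ℝ) < n := by exact_mod_cast (show 0 < n by omega)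
  have hk := oneMax_le x
  have hmono : ∀ y, cliff n d x ≤ cliff n d y →
      upperPotential n d (oneMax y) ≤ upperPotential n d (oneMax x) := fun y hy =>
    upperPotential_anti (by omega) hdn (oneMax_le y) ((cliff_le_cliff_iff hdn).1 hy)
  by_cases hedge : oneMax x + d = n
  · have hacc : cliff n d x ≤ cliff n d (fun _ => true) := by
      rw [cliff_le_cliff_iff hdn, oneMax_const_true]
      unfold cliffRank
      split_ifs <;> omega
    refine le_trans ?_ (le_eaDrift hmono hacc)
    have hmut := globalMut_ge x (fun _ => true) (by rw [hamming_const_true]; omega)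
    rw [hamming_const_true, show n - oneMax x = d by omega] at hmut
    rw [oneMax_const_true, upperPotential_self, show oneMax x = n - d by omega,
      upperPotential_edge (by omega) (by omega), sub_zero]
    calc (1 : ℝ) = (1 / n) ^ d / 3 * (3 * n ^ d) := by field_simp; simp [hn.ne']
      _ ≤ _ := by gcongr
  · obtain ⟨i, hi⟩ := exists_eq_false hx
    have hacc : cliff n d x ≤ cliff n d (Function.update x i true) := by
      rw [cliff_le_cliff_iff hdn, oneMax_update_true hi]
      unfold cliffRank
      split_ifs <;> omega
    refine le_trans ?_ (le_eaDrift hmono hacc)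
    have hmut := globalMut_ge x _ (hamming_update_true hi).ge
    rw [hamming_update_true hi, pow_one] at hmut
    have hgain := upperPotential_succ_add_le (d := d) (by omega) (lt_of_le_of_ne hk hx) hedge
    rw [oneMax_update_true hi]
    calc (1 : ℝ) = 1 / n / 3 * (3 * n) := by field_simp
      _ ≤ _ := mul_le_mul hmut (by linarith) (by positivity) (globalMut_nonneg _ _)

end UpperPotential

section LowerPotential

variable {d k l z : ℕ}

/-- Leaving `z` zeros for the far side of the cliff means flipping at least `d` of them,
and, to end within `d - 1` of the optimum, at least `z - d + 1` of them. -/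
def jumpExp (d z : ℕ) : ℕ := max d (z - d + 1)

noncomputable def jumpBound (n d z : ℕ) : ℝ :=
  z.choose (jumpExp d z) * (1 / n : ℝ) ^ jumpExp d z

lemma jumpBound_nonneg : 0 ≤ jumpBound n d z := by
  unfold jumpBound
  positivity

lemma jumpBound_self (hd : 1 ≤ d) : jumpBound n d d = (1 / n : ℝ) ^ d := by
  rw [jumpBound, jumpExp, max_eq_left (by omega), Nat.choose_self, Nat.cast_one, one_mul]

lemma twelve_mul_four_pow_mul_le (hd : 2 ≤ d) (hn : 192 ≤ n) : 12 * 4 ^ d * n ≤ n ^ d := by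
  obtain ⟨e, rfl⟩ : ∃ e, d = e + 2 := ⟨d - 2, by omega⟩
  calc 12 * 4 ^ (e + 2) * n = 192 * 4 ^ e * n := by ring
    _ ≤ n * n ^ e * n := by gcongr; omega
    _ = n ^ (e + 2) := by ring

lemma sum_jumpBound_Ico_le (hd : 2 ≤ d) (hn : 192 ≤ n) :
    ∑ z ∈ Ico (d + 1) (2 * d), jumpBound n d z ≤ 1 / (12 * n) := by
  have hn0 : (0 : ℝ) < n := by exact_mod_cast (show 0 < n by omega)
  have hexp : ∀ z ∈ Ico (d + 1) (2 * d), jumpBound n d z = z.choose d * (1 / n : ℝ) ^ d := by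
    intro z hz
    rw [mem_Ico] at hz
    rw [jumpBound, jumpExp, max_eq_left (by omega)]
  have hchoose : ∑ z ∈ Ico (d + 1) (2 * d), z.choose d ≤ 4 ^ d :=
    calc ∑ z ∈ Ico (d + 1) (2 * d), z.choose d ≤ ∑ z ∈ Icc d (2 * d - 1), z.choose d :=
          sum_le_sum_of_subset fun z hz => by simp only [mem_Ico, mem_Icc] at hz ⊢; omega
      _ = (2 * d).choose (d + 1) := by rw [Nat.sum_Icc_choose, Nat.sub_add_cancel (by omega)]
      _ ≤ 4 ^ d := (Nat.choose_le_two_pow _ _).trans_eq (by rw [pow_mul]; norm_num)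
  have hpow : (12 * 4 ^ d * n : ℝ) ≤ n ^ d := by exact_mod_cast twelve_mul_four_pow_mul_le hd hn
  rw [sum_congr rfl hexp, ← sum_mul, div_pow, one_pow, ← div_eq_mul_one_div,
    div_le_div_iff₀ (by positivity) (by positivity)]
  calc (∑ z ∈ Ico (d + 1) (2 * d), (z.choose d : ℝ)) * (12 * n)
      ≤ 4 ^ d * (12 * n) := by gcongr; exact_mod_cast hchoose
    _ ≤ 1 * n ^ d := by linarith

lemma jumpBound_le (hd : 1 ≤ d) (hz : 2 * d ≤ z) (hzn : z ≤ n) :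
    jumpBound n d z ≤ n ^ (d - 1) * (1 / n : ℝ) ^ (z - d + 1) := by
  rw [jumpBound, jumpExp, max_eq_right (by omega),
    Nat.choose_symm_of_eq_add (by omega : z = z - d + 1 + (d - 1))]
  gcongr
  exact_mod_cast (Nat.choose_le_pow _ _).trans (Nat.pow_le_pow_left hzn _)

lemma sum_jumpBound_Icc_le (hd : 1 ≤ d) (hn : 24 ≤ n) :
    ∑ z ∈ Icc (2 * d) n, jumpBound n d z ≤ 1 / (12 * n) := by
  have hn0 : (0 : ℝ) < n := by exact_mod_cast (show 0 < n by omega)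
  have hx1 : (1 / n : ℝ) < 1 := by rw [div_lt_one hn0]; exact_mod_cast (show 1 < n by omega)
  have hgeom : ∑ i ∈ range (n + 1 - 2 * d), (1 / n : ℝ) ^ i ≤ 2 := by
    rw [range_eq_Ico]
    refine (geom_sum_Ico_le_of_lt_one (by positivity) hx1).trans ?_
    rw [pow_zero, div_le_iff₀ (by linarith)]
    have : (1 / n : ℝ) ≤ 1 / 2 := by gcongr; exact_mod_cast (show 2 ≤ n by omega)
    linarith
  calc ∑ z ∈ Icc (2 * d) n, jumpBound n d z
      ≤ ∑ z ∈ Icc (2 * d) n, n ^ (d - 1) * (1 / n : ℝ) ^ (z - d + 1) :=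
        sum_le_sum fun z hz => jumpBound_le hd (mem_Icc.1 hz).1 (mem_Icc.1 hz).2
    _ = n ^ (d - 1) * (1 / n : ℝ) ^ (d + 1)
          * ∑ i ∈ range (n + 1 - 2 * d), (1 / n : ℝ) ^ i := by
        rw [← Ico_add_one_right_eq_Icc, sum_Ico_eq_sum_range, mul_sum]
        refine sum_congr rfl fun i _ => ?_
        rw [mul_assoc, ← pow_add]
        congr 2
        omega
    _ ≤ n ^ (d - 1) * (1 / n : ℝ) ^ (d + 1) * 2 := by gcongr
    _ = 2 / n ^ 2 := by
        rw [div_pow, one_pow, show d + 1 = (d - 1) + 2 by omega, pow_add]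
        field_simp
    _ ≤ 1 / (12 * n) := by
        rw [div_le_div_iff₀ (by positivity) (by positivity)]
        have : (24 : ℝ) ≤ n := by exact_mod_cast hn
        nlinarith

lemma sum_jumpBound_le (hd : 2 ≤ d) (hdn : 2 * d ≤ n) (hn : 192 ≤ n) :
    ∑ z ∈ Icc (d + 1) n, jumpBound n d z ≤ 1 / (6 * n) := by
  have hsplit : Icc (d + 1) n = Ico (d + 1) (2 * d) ∪ Icc (2 * d) n := by
    ext z; simp only [mem_Icc, mem_Ico, mem_union]; omega
  rw [hsplit, sum_union (disjoint_left.2 fun z h1 h2 => by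
    simp only [mem_Icc, mem_Ico] at h1 h2; omega)]
  have h1 := sum_jumpBound_Ico_le hd hn
  have h2 := sum_jumpBound_Icc_le (d := d) (by omega) (by omega : 24 ≤ n)
  have : 1 / (12 * n : ℝ) + 1 / (12 * n) = 1 / (6 * n) := by field_simp; norm_num
  linarith

noncomputable def lowerPotential (n d k : ℕ) : ℝ :=
  if k + d ≤ n then n ^ d - 3 * n ^ (d + 1) * ∑ z ∈ Icc (d + 1) (n - k), jumpBound n d z
  else 0

lemma lowerPotential_of_lt (h : n < k + d) : lowerPotential n d k = 0 :=
  if_neg (by omega)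

lemma half_le_lowerPotential (hd : 2 ≤ d) (hdn : 2 * d ≤ n) (hn : 192 ≤ n)
    (hk : k + d ≤ n) :
    (n : ℝ) ^ d / 2 ≤ lowerPotential n d k := by
  have hn0 : (0 : ℝ) < n := by exact_mod_cast (show 0 < n by omega)
  have hsub : ∑ z ∈ Icc (d + 1) (n - k), jumpBound n d z
      ≤ ∑ z ∈ Icc (d + 1) n, jumpBound n d z :=
    sum_le_sum_of_subset_of_nonneg (Icc_subset_Icc_right (by omega)) fun _ _ _ => jumpBound_nonneg
  have hmul : 3 * (n : ℝ) ^ (d + 1) * (1 / (6 * n)) = n ^ d / 2 := by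
    field_simp
    ring
  rw [lowerPotential, if_pos hk]
  nlinarith [sum_jumpBound_le hd hdn hn, pow_pos hn0 (d + 1)]

lemma lowerPotential_nonneg (hd : 2 ≤ d) (hdn : 2 * d ≤ n) (hn : 192 ≤ n) :
    0 ≤ lowerPotential n d k := by
  by_cases hk : k + d ≤ n
  · exact le_trans (by positivity) (half_le_lowerPotential hd hdn hn hk)
  · rw [lowerPotential_of_lt (by omega)]

lemma lowerPotential_le : lowerPotential n d k ≤ n ^ d := by
  unfold lowerPotential
  split_ifs
  · have : 0 ≤ ∑ z ∈ Icc (d + 1) (n - k), jumpBound n d z :=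
      sum_nonneg fun _ _ => jumpBound_nonneg
    nlinarith [pow_nonneg (Nat.cast_nonneg (α := ℝ) n) (d + 1)]
  · positivity

lemma lowerPotential_mono (hl : l + d ≤ n) (hkl : k ≤ l) :
    lowerPotential n d k ≤ lowerPotential n d l := by
  rw [lowerPotential, lowerPotential, if_pos hl, if_pos (by omega)]
  have : ∑ z ∈ Icc (d + 1) (n - l), jumpBound n d z
      ≤ ∑ z ∈ Icc (d + 1) (n - k), jumpBound n d z :=
    sum_le_sum_of_subset_of_nonneg (Icc_subset_Icc_right (by omega)) fun _ _ _ => jumpBound_nonneg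
  nlinarith [pow_nonneg (Nat.cast_nonneg (α := ℝ) n) (d + 1)]

lemma lowerPotential_succ (hk : k + d < n) :
    lowerPotential n d (k + 1)
      = lowerPotential n d k + 3 * n ^ (d + 1) * jumpBound n d (n - k) := by
  rw [lowerPotential, lowerPotential, if_pos (by omega), if_pos (by omega),
    show n - k = n - (k + 1) + 1 by omega, sum_Icc_succ_top (by omega)]
  ring

lemma sum_globalMut_cross_cliff_le (hdn : 2 * d ≤ n) {x : Fin n → Bool}
    (hx : oneMax x + d ≤ n) :
    ∑ y with cliff n d x ≤ cliff n d y ∧ n < oneMax y + d, globalMut n x y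
      ≤ jumpBound n d (n - oneMax x) := by
  rw [jumpBound, ← card_filter_eq_false]
  refine sum_globalMut_le_choose_mul x _ _ _ fun y hy => ?_
  rw [mem_filter, cliff_le_cliff_iff hdn] at hy
  obtain ⟨-, hacc, hy⟩ := hy
  rw [cliffRank_of_le hx, cliffRank_of_lt hy] at hacc
  have := oneMax_le_add_card_flipped_zeros x y
  have := oneMax_le y
  rw [card_filter_eq_false, jumpExp]
  omega

lemma sum_eaDriftTerm_lowerPotential_cross_le (hd : 2 ≤ d) (hdn : 2 * d ≤ n) (hn : 192 ≤ n)
    {x : Fin n → Bool} (hx : oneMax x + d ≤ n) :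
    ∑ y with cliff n d x ≤ cliff n d y ∧ n < oneMax y + d,
        eaDriftTerm (cliff n d) (fun y => lowerPotential n d (oneMax y)) x y
      ≤ n ^ d * jumpBound n d (n - oneMax x) :=
  calc _ ≤ ∑ y with cliff n d x ≤ cliff n d y ∧ n < oneMax y + d,
        globalMut n x y * n ^ d := by
        refine sum_le_sum fun y hy => ?_
        rw [eaDriftTerm_of_le (mem_filter.1 hy).2.1]
        have := globalMut_nonneg x y
        gcongr
        linarith [lowerPotential_nonneg (k := oneMax y) hd hdn hn,
          lowerPotential_le (n := n) (d := d) (k := oneMax x)]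
    _ ≤ n ^ d * jumpBound n d (n - oneMax x) := by
        rw [← sum_mul, mul_comm]
        gcongr
        exact sum_globalMut_cross_cliff_le hdn hx

lemma eaDriftTerm_lowerPotential_nonpos (hdn : 2 * d ≤ n) {x y : Fin n → Bool}
    (hx : oneMax x + d ≤ n) (hy : ¬ (cliff n d x ≤ cliff n d y ∧ n < oneMax y + d)) :
    eaDriftTerm (cliff n d) (fun y => lowerPotential n d (oneMax y)) x y ≤ 0 :=
  eaDriftTerm_nonpos fun hacc => by
    have hyl : oneMax y + d ≤ n := by
      by_contra h
      exact hy ⟨hacc, by omega⟩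
    have h := (cliff_le_cliff_iff hdn).1 hacc
    rw [cliffRank_of_le hx, cliffRank_of_le hyl] at h
    exact lowerPotential_mono hyl (by omega)

lemma eaDriftTerm_lowerPotential_update_le (hdn : 2 * d ≤ n) {x : Fin n → Bool}
    (hx : oneMax x + d < n) {i : Fin n} (hi : x i = false) :
    eaDriftTerm (cliff n d) (fun y => lowerPotential n d (oneMax y)) x (Function.update x i true)
      ≤ -(n ^ d * jumpBound n d (n - oneMax x)) := by
  have hacc : cliff n d x ≤ cliff n d (Function.update x i true) := by
    rw [cliff_le_cliff_iff hdn, oneMax_update_true hi, cliffRank_of_le hx.le,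
      cliffRank_of_le (by omega)]
    omega
  have hmut := globalMut_ge x _ (hamming_update_true hi).ge
  rw [hamming_update_true hi, pow_one] at hmut
  have hloss : 0 ≤ 3 * (n : ℝ) ^ (d + 1) * jumpBound n d (n - oneMax x) := by
    have := jumpBound_nonneg (n := n) (d := d) (z := n - oneMax x)
    positivity
  have hn0 : (n : ℝ) ≠ 0 := Nat.cast_ne_zero.2 (by omega)
  have : 1 / n / 3 * (3 * (n : ℝ) ^ (d + 1) * jumpBound n d (n - oneMax x))
      = n ^ d * jumpBound n d (n - oneMax x) := by
    field_simp
    ring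
  rw [eaDriftTerm_of_le hacc, oneMax_update_true hi, lowerPotential_succ hx]
  nlinarith [mul_le_mul_of_nonneg_right hmut hloss]

/-- The drift is at most `0` except on the cliff edge `k = n - d`, where the jump to the
optimum is the only improvement. -/
lemma eaDrift_lowerPotential_le_one (hd : 2 ≤ d) (hdn : 2 * d ≤ n) (hn : 192 ≤ n)
    (x : Fin n → Bool) :
    eaDrift (cliff n d) (fun y => lowerPotential n d (oneMax y)) x ≤ 1 := by
  by_cases hx : n < oneMax x + d
  · refine (sum_nonpos fun y _ => eaDriftTerm_nonpos fun _ => ?_).trans zero_le_one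
    rw [lowerPotential_of_lt hx]
    exact lowerPotential_nonneg hd hdn hn
  rw [not_lt] at hx
  set cross : (Fin n → Bool) → Prop := fun y => cliff n d x ≤ cliff n d y ∧ n < oneMax y + d
  have hcross := sum_eaDriftTerm_lowerPotential_cross_le hd hdn hn hx
  have hstay : ∀ y ∈ ({y | ¬ cross y} : Finset _),
      eaDriftTerm (cliff n d) (fun y => lowerPotential n d (oneMax y)) x y ≤ 0 :=
    fun y hy => eaDriftTerm_lowerPotential_nonpos hdn hx (mem_filter.1 hy).2
  rw [eaDrift, ← sum_filter_add_sum_filter_not univ cross]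
  by_cases hedge : oneMax x + d = n
  · rw [show n - oneMax x = d by omega, jumpBound_self (by omega), ← mul_pow,
      mul_one_div_cancel (Nat.cast_ne_zero.2 (by omega)), one_pow] at hcross
    linarith [sum_nonpos hstay]
  · obtain ⟨i, hi⟩ := exists_eq_false (x := x) (by omega)
    have hmem : Function.update x i true ∈ ({y | ¬ cross y} : Finset _) :=
      mem_filter.2 ⟨mem_univ _, fun h => by
        have := h.2
        rw [oneMax_update_true hi] at this
        omega⟩
    have hrest := sum_nonpos fun y (hy : y ∈ ({y | ¬ cross y} : Finset _).erase
      (Function.update x i true)) => hstay y (mem_of_mem_erase hy)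
    rw [← add_sum_erase _ _ hmem]
    linarith [eaDriftTerm_lowerPotential_update_le hdn (by omega) hi]

lemma quarter_le_sum_uniformInit_mul_lowerPotential (hd : 2 ≤ d) (hdn : 2 * d ≤ n)
    (hn : 192 ≤ n) :
    (n : ℝ) ^ d / 4 ≤ ∑ x, uniformInit n x * lowerPotential n d (oneMax x) := by
  have hcard : (2 : ℝ) ^ n ≤ 2 * #{x : Fin n → Bool | 2 * oneMax x ≤ n} := by
    exact_mod_cast two_pow_le_two_mul_card_oneMax_le_half
  calc (n : ℝ) ^ d / 4 = (2 : ℝ) ^ n / 2 * (1 / 2 ^ n * (n ^ d / 2)) := by field_simp; ring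
    _ ≤ #{x : Fin n → Bool | 2 * oneMax x ≤ n} * (1 / 2 ^ n * (n ^ d / 2)) := by
        gcongr
        linarith
    _ = ∑ x with 2 * oneMax x ≤ n, uniformInit n x * (n ^ d / 2) := by
        simp only [uniformInit, sum_const, nsmul_eq_mul]
    _ ≤ ∑ x with 2 * oneMax x ≤ n, uniformInit n x * lowerPotential n d (oneMax x) :=
        sum_le_sum fun x hx => mul_le_mul_of_nonneg_left
          (half_le_lowerPotential hd hdn hn (by have := (mem_filter.1 hx).2; omega))
          (isDistribution_uniformInit.1 x)
    _ ≤ ∑ x, uniformInit n x * lowerPotential n d (oneMax x) :=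
        sum_le_sum_of_subset_of_nonneg (filter_subset _ _) fun x _ _ =>
          mul_nonneg (isDistribution_uniformInit.1 x) (lowerPotential_nonneg hd hdn hn)

end LowerPotential

end EACliff

open EACliff in
theorem ea_cliff_theta_n_pow_d :
    ∃ c₁ : ℝ, 0 < c₁ ∧ ∃ c₂ : ℝ, 0 < c₂ ∧ ∃ n₀ : ℕ, ∀ n : ℕ, n₀ ≤ n →
      ∀ d : ℕ, 2 ≤ d → 2 * d ≤ n →
        ENNReal.ofReal (c₁ * (n : ℝ) ^ d) ≤
            expectedTime (fun x => oneMax x = n) (eaKernel (cliff n d))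
              (uniformInit n) ∧
          expectedTime (fun x => oneMax x = n) (eaKernel (cliff n d))
              (uniformInit n) ≤
            ENNReal.ofReal (c₂ * (n : ℝ) ^ d) := by
  refine ⟨1 / 4, by norm_num, 6, by norm_num, 192, fun n hn d hd hdn => ⟨?_, ?_⟩⟩
  · calc ENNReal.ofReal (1 / 4 * (n : ℝ) ^ d)
        ≤ ENNReal.ofReal (∑ x, uniformInit n x * lowerPotential n d (oneMax x)) :=
          ENNReal.ofReal_le_ofReal
            (by linarith [quarter_le_sum_uniformInit_mul_lowerPotential hd hdn hn])
      _ ≤ _ := le_expectedTime_of_drift (isStochastic_eaKernel _) isDistribution_uniformInit _ _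
          (fun _ => lowerPotential_le) (fun _ hx => (lowerPotential_of_lt (by omega)).le)
          fun x _ => by
            rw [sum_eaKernel_mul]
            linarith [eaDrift_lowerPotential_le_one hd hdn hn x]
  · calc _ ≤ ENNReal.ofReal (∑ x, uniformInit n x * upperPotential n d (oneMax x)) :=
          expectedTime_le_of_drift (isStochastic_eaKernel _) isDistribution_uniformInit _
            (fun _ => upperPotential_nonneg) fun x hx => by
              rw [sum_eaKernel_mul]
              linarith [one_le_eaDrift_upperPotential (by omega) hdn hx]
      _ ≤ _ := ENNReal.ofReal_le_ofReal
          (isDistribution_uniformInit.sum_mul_le fun _ => upperPotential_le hd)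
end

section
/- For every n ≥ 2, with selection strength β = n^{−3/2} and population size N = n^{3/2}·ln n (so that Nβ = ln n), every fitness decrease of magnitude at least n/2 is accepted with probability at most e/(n^n − 1); that is, for all real Δf ≤ −n/2, p_fix(Δf) ≤ e/(n^n − 1). -/
/-!
For a loss `Δf < 0` write `T = -2Δf ≥ n` and `L = Nβ = log n`; then
`p_fix = (e^{βT} - 1)/(n^T - 1)`. Since `βn ≤ 1` and `β ≤ L`, the exponents satisfy
`βT + n L ≤ L T + 1`, i.e. `e^{βT} n^n ≤ e · n^T`, and the `- 1`s are absorbed because `n^n ≥ e`.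
-/

open Real

lemma pfix_of_neg {β N Δf : ℝ} (hΔf : Δf < 0) :
    pfix β N Δf = (exp (-2 * β * Δf) - 1) / (exp (-2 * N * β * Δf) - 1) := by
  rw [pfix, if_neg hΔf.ne, ← neg_div_neg_eq, neg_sub, neg_sub]

lemma exp_sub_one_div_exp_sub_one_le {s t u : ℝ} (hs : 0 ≤ s) (hu : 1 ≤ u)
    (hstu : s + u ≤ t + 1) :
    (exp s - 1) / (exp t - 1) ≤ exp 1 / (exp u - 1) := by
  have hexp_u : exp 1 ≤ exp u := exp_le_exp.mpr hu
  have hexp_s : 1 ≤ exp s := one_le_exp hs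
  have hu_pos : 0 < exp u - 1 := sub_pos.mpr (one_lt_exp_iff.mpr (by linarith))
  rcases (show 0 ≤ t by linarith).eq_or_lt with rfl | ht
  · rw [exp_zero, sub_self, div_zero]
    positivity
  have ht_pos : 0 < exp t - 1 := sub_pos.mpr (one_lt_exp_iff.mpr ht)
  have hprod : exp s * exp u ≤ exp 1 * exp t := by
    rw [← exp_add, ← exp_add]
    exact exp_le_exp.mpr (by linarith)
  rw [div_le_div_iff₀ ht_pos hu_pos]
  nlinarith

lemma pfix_le_of_le_neg_half {β N m Δf : ℝ} (hβ : 0 ≤ β) (hβN : β ≤ N * β)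
    (hβm : β * m ≤ 1) (hm : 1 ≤ m * (N * β)) (hΔf : Δf ≤ -(m / 2)) :
    pfix β N Δf ≤ exp 1 / (exp (m * (N * β)) - 1) := by
  have hm_pos : 0 < m := by nlinarith
  rw [pfix_of_neg (by linarith)]
  apply exp_sub_one_div_exp_sub_one_le (by nlinarith) hm
  nlinarith [mul_le_mul_of_nonneg_right hβN (show 0 ≤ -2 * Δf - m by linarith)]

theorem pfix_large_loss_rejected (n : ℕ) (hn : 2 ≤ n) (Δf : ℝ)
    (h : Δf ≤ -((n : ℝ) / 2)) :
    pfix ((n : ℝ) ^ (-(3 : ℝ) / 2)) ((n : ℝ) ^ ((3 : ℝ) / 2) * Real.log n) Δf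
      ≤ Real.exp 1 / ((n : ℝ) ^ n - 1) := by
  have hn2 : (2 : ℝ) ≤ n := by exact_mod_cast hn
  have hn0 : (0 : ℝ) < n := by linarith
  set β := (n : ℝ) ^ (-(3 : ℝ) / 2)
  have hβ : 0 ≤ β := by positivity
  have hNβ : (n : ℝ) ^ ((3 : ℝ) / 2) * log n * β = log n := by
    rw [mul_right_comm, ← rpow_add hn0]
    norm_num
  have hβn : β * n ≤ 1 := by
    calc β * n = (n : ℝ) ^ (-(1 : ℝ) / 2) := by
          rw [← rpow_add_one hn0.ne']
          norm_num
      _ ≤ 1 := rpow_le_one_of_one_le_of_nonpos (by linarith) (by norm_num)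
  have hlog : 1 / 2 < log n := by
    linarith [log_two_gt_d9, log_le_log (by norm_num) hn2]
  have hpow : exp (n * log n) = (n : ℝ) ^ n := by
    rw [exp_nat_mul, exp_log hn0]
  have key :=
    pfix_le_of_le_neg_half hβ (by rw [hNβ]; nlinarith) hβn (by rw [hNβ]; nlinarith) h
  rwa [hNβ, hpow] at key
end
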